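/- arXiv:0907.5506 — 5 statements merged into one kernel-verified Lean document; each statement's English description precedes it below -/
import Mathlib

section
/- For functions u, z in H^2(0,1) vanishing with their first derivatives at 0 and 1, the map f(u) = -∂_x (G * (u^2 + (1/2)u_x^2)) satisfies the Lipschitz estimate ‖f(u) - f(z)‖_{H^2} ≤ (3/2)(‖u‖_{H^2} + ‖z‖_{H^2}) ‖u - z‖_{H^2}. -/
open MeasureTheory

noncomputable def Gper : ℝ → ℝ := fun x => Real.cosh (Int.fract x - 1/2) / (2 * Real.sinh (1/2))

noncomputable def convG (h : ℝ → ℝ) : ℝ → ℝ := fun x => ∫ y in (0:ℝ)..1, Gper (x - y) * h y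

noncomputable def H1norm (f : ℝ → ℝ) : ℝ :=
  Real.sqrt ((∫ x in (0:ℝ)..1, (f x)^2) + ∫ x in (0:ℝ)..1, (deriv f x)^2)

noncomputable def H2norm (f : ℝ → ℝ) : ℝ :=
  Real.sqrt ((∫ x in (0:ℝ)..1, (f x)^2) + (∫ x in (0:ℝ)..1, (deriv f x)^2)
    + ∫ x in (0:ℝ)..1, (deriv (deriv f) x)^2)

noncomputable def fCH (u : ℝ → ℝ) : ℝ → ℝ :=
  fun x => -deriv (convG fun y => (u y)^2 + (1/2) * (deriv u y)^2) x

/-!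
On `[0, 1]`, `V = G * h` and `W = ∂ₓ (G * h)` solve `V' = W`, `W' = V - h` with periodic boundary
values. For `h = w u - w z`, `w v = v² + ½ vₓ²`, we have `f u - f z = -W`, and integrating by
parts gives `‖W‖²_{H²} ≤ ‖hₓ‖²_{L²}`. With `p = u - z` and `q = u + z`, `h = p q + ½ pₓ qₓ`, so
`hₓ = pₓ (q + ½ qₓₓ) + qₓ (p + ½ pₓₓ)`. Since `pₓ` vanishes at both ends, `pₓ² ≤ ‖p‖²_{H²} / 2`
pointwise, and integrating `q qₓₓ` by parts gives `∫ (q + ½ qₓₓ)² ≤ ‖q‖²_{H²}`; hence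
`‖hₓ‖²_{L²} ≤ 2 ‖p‖²_{H²} ‖q‖²_{H²}`. With `‖q‖ ≤ ‖u‖ + ‖z‖` the Lipschitz constant is
`√2 · (‖u‖ + ‖z‖) ≤ 3/2 · (‖u‖ + ‖z‖)`.
-/

open Real Set

lemma continuous_of_hasDerivAt {f f' : ℝ → ℝ} (hf : ∀ x, HasDerivAt f (f' x) x) :
    Continuous f :=
  continuous_iff_continuousAt.2 fun x => (hf x).continuousAt

lemma hasDerivAt_deriv_of_contDiff_two {f : ℝ → ℝ} (hf : ContDiff ℝ 2 f) :
    (∀ x, HasDerivAt f (deriv f x) x) ∧ (∀ x, HasDerivAt (deriv f) (deriv (deriv f) x) x) ∧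
      Continuous (deriv (deriv f)) :=
  ⟨fun x => (hf.differentiable (by norm_num) x).hasDerivAt,
    fun x => (hf.differentiable_deriv_two x).hasDerivAt, (hf.iterate_deriv' 0 2).continuous⟩

lemma hasDerivAt_sq_add_half_sq {v v' v'' : ℝ → ℝ} {x : ℝ} (hv : HasDerivAt v (v' x) x)
    (hv' : HasDerivAt v' (v'' x) x) :
    HasDerivAt (fun y => v y ^ 2 + 1/2 * v' y ^ 2) (v' x * (2 * v x + v'' x)) x :=
  ((hv.fun_pow 2).add ((hv'.fun_pow 2).const_mul (1/2))).congr_deriv (by push_cast; ring)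

section Integration
variable {a b : ℝ}

lemma integral_le_of_le_add_hasDerivAt {X Y F F' : ℝ → ℝ} (hab : a ≤ b) (hX : Continuous X)
    (hY : Continuous Y) (hF : ∀ x, HasDerivAt F (F' x) x) (hF' : Continuous F')
    (hle : ∀ x ∈ Icc a b, X x ≤ Y x + F' x) :
    ∫ x in a..b, X x ≤ (∫ x in a..b, Y x) + (F b - F a) := by
  rw [← intervalIntegral.integral_eq_sub_of_hasDerivAt (fun x _ => hF x)
      (hF'.intervalIntegrable a b),
    ← intervalIntegral.integral_add (hY.intervalIntegrable a b) (hF'.intervalIntegrable a b)]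
  exact intervalIntegral.integral_mono_on hab (hX.intervalIntegrable a b)
    ((hY.add hF').intervalIntegrable a b) hle

lemma sq_le_half_integral {f f' : ℝ → ℝ} (hf : ∀ x, HasDerivAt f (f' x) x)
    (hf' : Continuous f') (ha : f a = 0) (hb : f b = 0) {x : ℝ} (hx : x ∈ Icc a b) :
    f x ^ 2 ≤ (∫ t in a..b, (f t ^ 2 + f' t ^ 2)) / 2 := by
  have hfc := continuous_of_hasDerivAt hf
  have hsq (s : ℝ) (t : ℝ) : HasDerivAt (fun t => s * f t ^ 2) (s * (2 * f t * f' t)) t :=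
    (((hf t).fun_pow 2).const_mul s).congr_deriv (by push_cast; ring)
  have hY : Continuous fun t => f t ^ 2 + f' t ^ 2 := by fun_prop
  have left := integral_le_of_le_add_hasDerivAt (X := fun _ => 0) hx.1 continuous_const hY
    (hsq (-1)) (by fun_prop) fun t _ => by nlinarith [sq_nonneg (f t - f' t)]
  have right := integral_le_of_le_add_hasDerivAt (X := fun _ => 0) hx.2 continuous_const hY (hsq 1)
    (by fun_prop) fun t _ => by nlinarith [sq_nonneg (f t + f' t)]
  rw [← intervalIntegral.integral_add_adjacent_intervals (b := x) (hY.intervalIntegrable a x)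
    (hY.intervalIntegrable x b)]
  simp only [intervalIntegral.integral_zero, ha, hb] at left right
  linarith

-- The integrand is `h' ^ 2 - (V - h) ^ 2 + (2 * (V * W - W * h))'`.
lemma integral_energy_le {h h' V W : ℝ → ℝ} (hab : a ≤ b) (hh : ∀ x, HasDerivAt h (h' x) x)
    (hh' : Continuous h') (hV : ∀ x, HasDerivAt V (W x) x)
    (hW : ∀ x, HasDerivAt W (V x - h x) x) (ha : h a = 0) (hb : h b = 0) (hVab : V b = V a)
    (hWab : W b = W a) :
    ∫ x in a..b, (W x ^ 2 + (h x - V x) ^ 2 + (h' x - W x) ^ 2) ≤ ∫ x in a..b, h' x ^ 2 := by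
  have := continuous_of_hasDerivAt hh
  have := continuous_of_hasDerivAt hV
  have := continuous_of_hasDerivAt hW
  have key := integral_le_of_le_add_hasDerivAt (X := fun x => W x ^ 2 + (h x - V x) ^ 2 +
    (h' x - W x) ^ 2) (Y := fun x => h' x ^ 2) hab (by fun_prop) (by fun_prop)
    (fun x => (((hV x).fun_mul (hW x)).fun_sub ((hW x).fun_mul (hh x))).const_mul 2) (by fun_prop)
    fun x _ => by nlinarith [sq_nonneg (V x - h x)]
  simpa only [ha, hb, hVab, hWab, sub_self, add_zero] using key

lemma integral_sq_add_half_le {q q' q'' : ℝ → ℝ} (hab : a ≤ b) (hq : ∀ x, HasDerivAt q (q' x) x)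
    (hq' : ∀ x, HasDerivAt q' (q'' x) x) (hq'' : Continuous q'') (ha : q a = 0) (hb : q b = 0) :
    ∫ x in a..b, (q x + q'' x / 2) ^ 2 ≤ ∫ x in a..b, (q x ^ 2 + q' x ^ 2 + q'' x ^ 2) := by
  have := continuous_of_hasDerivAt hq
  have := continuous_of_hasDerivAt hq'
  have key := integral_le_of_le_add_hasDerivAt (X := fun x => (q x + q'' x / 2) ^ 2)
    (Y := fun x => q x ^ 2 + q' x ^ 2 + q'' x ^ 2) hab (by fun_prop) (by fun_prop)
    (fun x => (hq x).fun_mul (hq' x)) (by fun_prop)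
    fun x _ => by nlinarith [sq_nonneg (q' x), sq_nonneg (q'' x)]
  simpa only [ha, hb, zero_mul, sub_self, add_zero] using key

end Integration

lemma Gper_add_one (t : ℝ) : Gper (t + 1) = Gper t := by
  unfold Gper; rw [Int.fract_add_one]

lemma Gper_of_mem_Icc {t : ℝ} (ht : t ∈ Icc (0:ℝ) 1) :
    Gper t = cosh (t - 1/2) / (2 * sinh (1/2)) := by
  rcases ht.2.eq_or_lt with rfl | ht1
  · simp only [Gper, Int.fract_one]
    rw [← cosh_neg]; norm_num
  · rw [Gper, Int.fract_eq_self.2 ⟨ht.1, ht1⟩]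

lemma Gper_of_mem_Icc_neg {t : ℝ} (ht : t ∈ Icc (-1:ℝ) 0) :
    Gper t = cosh (t + 1/2) / (2 * sinh (1/2)) := by
  rw [← Gper_add_one, Gper_of_mem_Icc ⟨by linarith [ht.1], by linarith [ht.2]⟩]
  ring_nf

lemma continuous_Gper : Continuous Gper :=
  (ContinuousOn.comp_fract'' (f := fun t => cosh (t - 1/2)) (by fun_prop)
    (by rw [← cosh_neg]; norm_num)).div_const _

section Green
variable {h : ℝ → ℝ}

lemma convG_sub {f g : ℝ → ℝ} (hf : Continuous f) (hg : Continuous g) (x : ℝ) :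
    convG (fun y => f y - g y) x = convG f x - convG g x := by
  simp only [convG, mul_sub]
  exact intervalIntegral.integral_sub
    (((continuous_Gper.comp (by fun_prop)).mul hf).intervalIntegrable _ _)
    (((continuous_Gper.comp (by fun_prop)).mul hg).intervalIntegrable _ _)

lemma integral_cosh_sub_mul {g : ℝ → ℝ} (hg : Continuous g) (hh : Continuous h) (a b x : ℝ) :
    ∫ y in a..b, cosh (x - g y) * h y
      = cosh x * (∫ y in a..b, cosh (g y) * h y) - sinh x * ∫ y in a..b, sinh (g y) * h y := by
  rw [← intervalIntegral.integral_const_mul, ← intervalIntegral.integral_const_mul,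
    ← intervalIntegral.integral_sub ((by fun_prop : Continuous _).intervalIntegrable _ _)
      ((by fun_prop : Continuous _).intervalIntegrable _ _)]
  congr 1 with y
  rw [cosh_sub]; ring

lemma integral_sinh_sub_mul {g : ℝ → ℝ} (hg : Continuous g) (hh : Continuous h) (a b x : ℝ) :
    ∫ y in a..b, sinh (x - g y) * h y
      = sinh x * (∫ y in a..b, cosh (g y) * h y) - cosh x * ∫ y in a..b, sinh (g y) * h y := by
  rw [← intervalIntegral.integral_const_mul, ← intervalIntegral.integral_const_mul,
    ← intervalIntegral.integral_sub ((by fun_prop : Continuous _).intervalIntegrable _ _)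
      ((by fun_prop : Continuous _).intervalIntegrable _ _)]
  congr 1 with y
  rw [sinh_sub]; ring

/- On `[0, 1]`, `2 sinh (1/2) * Gper (x - y)` is `cosh (x - (y + 1/2))` for `y ≤ x` and
`cosh (x - (y - 1/2))` for `y ≥ x`; expanding `cosh (x - ·)` separates the variables, leaving
these coefficients (variation of constants). -/
noncomputable def greenCoeff (φ h : ℝ → ℝ) (x : ℝ) : ℝ :=
  (∫ y in (0:ℝ)..x, φ (y + 1/2) * h y) + ∫ y in x..1, φ (y - 1/2) * h y

lemma hasDerivAt_greenCoeff {φ : ℝ → ℝ} (hφ : Continuous φ) (hh : Continuous h) (x : ℝ) :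
    HasDerivAt (greenCoeff φ h) ((φ (x + 1/2) - φ (x - 1/2)) * h x) x := by
  have hr : Continuous fun y => φ (y - 1/2) * h y := by fun_prop
  have := ((by fun_prop : Continuous fun y => φ (y + 1/2) * h y).integral_hasStrictDerivAt 0 x
    ).hasDerivAt.add (intervalIntegral.integral_hasDerivAt_left (hr.intervalIntegrable x 1)
      (hr.stronglyMeasurableAtFilter _ _) hr.continuousAt)
  exact this.congr_deriv (by ring)

noncomputable def convGExt (h : ℝ → ℝ) (x : ℝ) : ℝ :=
  (cosh x * greenCoeff cosh h x - sinh x * greenCoeff sinh h x) / (2 * sinh (1/2))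

noncomputable def convGExtDeriv (h : ℝ → ℝ) (x : ℝ) : ℝ :=
  (sinh x * greenCoeff cosh h x - cosh x * greenCoeff sinh h x) / (2 * sinh (1/2))

lemma hasDerivAt_convGExt (hh : Continuous h) (x : ℝ) :
    HasDerivAt (convGExt h) (convGExtDeriv h x) x := by
  have := (((hasDerivAt_cosh x).mul (hasDerivAt_greenCoeff continuous_cosh hh x)).sub
    ((hasDerivAt_sinh x).mul (hasDerivAt_greenCoeff continuous_sinh hh x))).div_const
    (2 * sinh (1/2))
  refine this.congr_deriv ?_
  simp only [convGExtDeriv, cosh_add, cosh_sub, sinh_add, sinh_sub]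
  ring

lemma hasDerivAt_convGExtDeriv (hh : Continuous h) (x : ℝ) :
    HasDerivAt (convGExtDeriv h) (convGExt h x - h x) x := by
  have := (((hasDerivAt_sinh x).mul (hasDerivAt_greenCoeff continuous_cosh hh x)).sub
    ((hasDerivAt_cosh x).mul (hasDerivAt_greenCoeff continuous_sinh hh x))).div_const
    (2 * sinh (1/2))
  refine this.congr_deriv ?_
  have hs : sinh (1/2 : ℝ) ≠ 0 := (sinh_pos_iff.2 (by norm_num)).ne'
  simp only [convGExt, cosh_add, cosh_sub, sinh_add, sinh_sub]
  field_simp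
  linear_combination (-2 * sinh (1/2) * h x) * cosh_sq_sub_sinh_sq x

lemma convGExt_one (hh : Continuous h) : convGExt h 1 = convGExt h 0 := by
  simp only [convGExt, greenCoeff, intervalIntegral.integral_same, add_zero, zero_add, cosh_zero,
    sinh_zero, one_mul, zero_mul, sub_zero]
  rw [← integral_cosh_sub_mul (by fun_prop) hh]
  congr 2 with y
  rw [← cosh_neg]; ring_nf

lemma convGExtDeriv_one (hh : Continuous h) : convGExtDeriv h 1 = convGExtDeriv h 0 := by
  simp only [convGExtDeriv, greenCoeff, intervalIntegral.integral_same, add_zero, zero_add,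
    cosh_zero, sinh_zero, one_mul, zero_mul, zero_sub]
  rw [← integral_sinh_sub_mul (by fun_prop) hh, ← intervalIntegral.integral_neg]
  congr 2 with y
  rw [← neg_mul, ← sinh_neg]; ring_nf

lemma convG_eq_convGExt (hh : Continuous h) {x : ℝ} (hx : x ∈ Icc (0:ℝ) 1) :
    convG h x = convGExt h x := by
  have hG : Continuous fun y => Gper (x - y) * h y :=
    (continuous_Gper.comp (by fun_prop)).mul hh
  have left : ∫ y in (0:ℝ)..x, Gper (x - y) * h y
      = (∫ y in (0:ℝ)..x, cosh (x - (y + 1/2)) * h y) / (2 * sinh (1/2)) := by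
    rw [← intervalIntegral.integral_div]
    refine intervalIntegral.integral_congr fun y hy => ?_
    rw [uIcc_of_le hx.1] at hy
    rw [Gper_of_mem_Icc ⟨by linarith [hy.2], by linarith [hy.1, hx.2]⟩]
    ring_nf
  have right : ∫ y in x..1, Gper (x - y) * h y
      = (∫ y in x..1, cosh (x - (y - 1/2)) * h y) / (2 * sinh (1/2)) := by
    rw [← intervalIntegral.integral_div]
    refine intervalIntegral.integral_congr fun y hy => ?_
    rw [uIcc_of_le hx.2] at hy
    rw [Gper_of_mem_Icc_neg ⟨by linarith [hy.2, hx.1], by linarith [hy.1]⟩]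
    ring_nf
  rw [convG, ← intervalIntegral.integral_add_adjacent_intervals (hG.intervalIntegrable 0 x)
    (hG.intervalIntegrable x 1), left, right, integral_cosh_sub_mul (by fun_prop) hh,
    integral_cosh_sub_mul (by fun_prop) hh, convGExt, greenCoeff, greenCoeff]
  ring

lemma hasDerivAt_convG (hh : Continuous h) {x : ℝ} (hx : x ∈ Ioo (0:ℝ) 1) :
    HasDerivAt (convG h) (convGExtDeriv h x) x :=
  (hasDerivAt_convGExt hh x).congr_of_eventuallyEq <|
    Filter.eventually_of_mem (Ioo_mem_nhds hx.1 hx.2) fun _ hy =>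
      convG_eq_convGExt hh (Ioo_subset_Icc_self hy)

lemma convGExtDeriv_sub {f g : ℝ → ℝ} (hf : Continuous f) (hg : Continuous g) {x : ℝ}
    (hx : x ∈ Ioo (0:ℝ) 1) :
    convGExtDeriv (fun y => f y - g y) x = convGExtDeriv f x - convGExtDeriv g x := by
  have hfg : Continuous fun y => f y - g y := hf.sub hg
  refine (hasDerivAt_convG hfg hx).unique ?_
  rw [show convG (fun y => f y - g y) = fun y => convG f y - convG g y from
    funext (convG_sub hf hg)]
  exact (hasDerivAt_convG hf hx).sub (hasDerivAt_convG hg hx)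

end Green

lemma H2norm_nonneg (f : ℝ → ℝ) : 0 ≤ H2norm f := Real.sqrt_nonneg _

lemma H2norm_congr_Ioo {f g : ℝ → ℝ} (hfg : EqOn f g (Ioo 0 1)) : H2norm f = H2norm g := by
  have hd : EqOn (deriv f) (deriv g) (Ioo 0 1) := hfg.deriv isOpen_Ioo
  have hdd : EqOn (deriv (deriv f)) (deriv (deriv g)) (Ioo 0 1) := hd.deriv isOpen_Ioo
  have key {F G : ℝ → ℝ} (hFG : EqOn F G (Ioo 0 1)) :
      ∫ x in (0:ℝ)..1, F x ^ 2 = ∫ x in (0:ℝ)..1, G x ^ 2 := by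
    simp only [intervalIntegral.integral_of_le zero_le_one, integral_Ioc_eq_integral_Ioo]
    exact setIntegral_congr_fun measurableSet_Ioo fun x hx => by rw [hFG hx]
  simp only [H2norm, key hfg, key hd, key hdd]

lemma H2norm_sq_of_hasDerivAt {f f' f'' : ℝ → ℝ} (hf : ∀ x, HasDerivAt f (f' x) x)
    (hf' : ∀ x, HasDerivAt f' (f'' x) x) (hf'' : Continuous f'') :
    H2norm f ^ 2 = ∫ x in (0:ℝ)..1, (f x ^ 2 + f' x ^ 2 + f'' x ^ 2) := by
  have := continuous_of_hasDerivAt hf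
  have := continuous_of_hasDerivAt hf'
  have hd : deriv f = f' := funext fun x => (hf x).deriv
  have hdd : deriv f' = f'' := funext fun x => (hf' x).deriv
  have hint {F : ℝ → ℝ} (hF : Continuous F) : IntervalIntegrable F volume 0 1 :=
    hF.intervalIntegrable 0 1
  rw [intervalIntegral.integral_add (hint (by fun_prop)) (hint (by fun_prop)),
    intervalIntegral.integral_add (hint (by fun_prop)) (hint (by fun_prop)), H2norm, hd, hdd,
    Real.sq_sqrt]
  have hnonneg (F : ℝ → ℝ) : 0 ≤ ∫ x in (0:ℝ)..1, F x ^ 2 :=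
    intervalIntegral.integral_nonneg zero_le_one fun x _ => sq_nonneg _
  linarith [hnonneg f, hnonneg f', hnonneg f'']

lemma H2norm_add_le {f f' f'' g g' g'' : ℝ → ℝ} (hf : ∀ x, HasDerivAt f (f' x) x)
    (hf' : ∀ x, HasDerivAt f' (f'' x) x) (hf'' : Continuous f'')
    (hg : ∀ x, HasDerivAt g (g' x) x) (hg' : ∀ x, HasDerivAt g' (g'' x) x)
    (hg'' : Continuous g'') :
    H2norm (fun x => f x + g x) ≤ H2norm f + H2norm g := by
  have := continuous_of_hasDerivAt hf
  have := continuous_of_hasDerivAt hf'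
  have := continuous_of_hasDerivAt hg
  have := continuous_of_hasDerivAt hg'
  set S := ∫ x in (0:ℝ)..1, (f x * g x + f' x * g' x + f'' x * g'' x)
  have hint {F : ℝ → ℝ} (hF : Continuous F) : IntervalIntegrable F volume 0 1 :=
    hF.intervalIntegrable 0 1
  have expand (t : ℝ) : ∫ x in (0:ℝ)..1, ((t * f x + g x) ^ 2 + (t * f' x + g' x) ^ 2
      + (t * f'' x + g'' x) ^ 2) = H2norm f ^ 2 * (t * t) + 2 * S * t + H2norm g ^ 2 := by
    rw [H2norm_sq_of_hasDerivAt hf hf' hf'', H2norm_sq_of_hasDerivAt hg hg' hg'']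
    calc _ = ∫ x in (0:ℝ)..1, ((t * t) * (f x ^ 2 + f' x ^ 2 + f'' x ^ 2)
          + (2 * t) * (f x * g x + f' x * g' x + f'' x * g'' x)
          + (g x ^ 2 + g' x ^ 2 + g'' x ^ 2)) :=
        intervalIntegral.integral_congr fun x _ => by ring
      _ = _ := by
        rw [intervalIntegral.integral_add (hint (by fun_prop)) (hint (by fun_prop)),
          intervalIntegral.integral_add (hint (by fun_prop)) (hint (by fun_prop)),
          intervalIntegral.integral_const_mul, intervalIntegral.integral_const_mul]
        ring
  -- Cauchy–Schwarz: `expand t` is a nonnegative quadratic in `t`.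
  have hS : S ≤ H2norm f * H2norm g := by
    have hd := discrim_le_zero fun t => (expand t).symm ▸
      intervalIntegral.integral_nonneg zero_le_one fun x _ => by positivity
    refine le_of_sq_le_sq ?_ (mul_nonneg (H2norm_nonneg f) (H2norm_nonneg g))
    rw [discrim] at hd
    linarith
  have hsum := expand 1
  simp only [one_mul] at hsum
  rw [← H2norm_sq_of_hasDerivAt (f := fun x => f x + g x) (fun x => (hf x).add (hg x))
    (fun x => (hf' x).add (hg' x)) (hf''.add hg'')] at hsum
  rw [← sq_le_sq₀ (H2norm_nonneg _) (add_nonneg (H2norm_nonneg f) (H2norm_nonneg g)), hsum]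
  nlinarith

lemma integral_sq_le_two_mul_H2norm_sq {p p' p'' q q' q'' : ℝ → ℝ}
    (hp : ∀ x, HasDerivAt p (p' x) x) (hp' : ∀ x, HasDerivAt p' (p'' x) x)
    (hp'' : Continuous p'') (hq : ∀ x, HasDerivAt q (q' x) x)
    (hq' : ∀ x, HasDerivAt q' (q'' x) x) (hq'' : Continuous q'')
    (hp0 : p 0 = 0) (hp1 : p 1 = 0) (hp0' : p' 0 = 0) (hp1' : p' 1 = 0)
    (hq0 : q 0 = 0) (hq1 : q 1 = 0) (hq0' : q' 0 = 0) (hq1' : q' 1 = 0) :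
    ∫ x in (0:ℝ)..1, (p' x * (q x + q'' x / 2) + q' x * (p x + p'' x / 2)) ^ 2
      ≤ 2 * H2norm p ^ 2 * H2norm q ^ 2 := by
  have deriv_sq_le {f f' f'' : ℝ → ℝ} (hf : ∀ x, HasDerivAt f (f' x) x)
      (hf' : ∀ x, HasDerivAt f' (f'' x) x) (hf'' : Continuous f'') (h0 : f' 0 = 0)
      (h1 : f' 1 = 0) {x : ℝ} (hx : x ∈ Icc (0:ℝ) 1) : f' x ^ 2 ≤ H2norm f ^ 2 / 2 := by
    have := continuous_of_hasDerivAt hf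
    have := continuous_of_hasDerivAt hf'
    rw [H2norm_sq_of_hasDerivAt hf hf' hf'']
    refine (sq_le_half_integral hf' hf'' h0 h1 hx).trans (div_le_div_of_nonneg_right
      (intervalIntegral.integral_mono_on zero_le_one
        ((by fun_prop : Continuous _).intervalIntegrable _ _)
        ((by fun_prop : Continuous _).intervalIntegrable _ _) fun t _ => ?_) zero_le_two)
    nlinarith [sq_nonneg (f t)]
  have integral_half_le {f f' f'' : ℝ → ℝ} (hf : ∀ x, HasDerivAt f (f' x) x)
      (hf' : ∀ x, HasDerivAt f' (f'' x) x) (hf'' : Continuous f'') (h0 : f 0 = 0)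
      (h1 : f 1 = 0) : ∫ x in (0:ℝ)..1, (f x + f'' x / 2) ^ 2 ≤ H2norm f ^ 2 := by
    rw [H2norm_sq_of_hasDerivAt hf hf' hf'']
    exact integral_sq_add_half_le zero_le_one hf hf' hf'' h0 h1
  have := continuous_of_hasDerivAt hp
  have := continuous_of_hasDerivAt hp'
  have := continuous_of_hasDerivAt hq
  have := continuous_of_hasDerivAt hq'
  calc _ ≤ ∫ x in (0:ℝ)..1, (H2norm p ^ 2 * (q x + q'' x / 2) ^ 2
        + H2norm q ^ 2 * (p x + p'' x / 2) ^ 2) := by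
        refine intervalIntegral.integral_mono_on zero_le_one
          ((by fun_prop : Continuous _).intervalIntegrable _ _)
          ((by fun_prop : Continuous _).intervalIntegrable _ _) fun x hx => ?_
        have hpx := deriv_sq_le hp hp' hp'' hp0' hp1' hx
        have hqx := deriv_sq_le hq hq' hq'' hq0' hq1' hx
        nlinarith [sq_nonneg (p' x * (q x + q'' x / 2) - q' x * (p x + p'' x / 2)),
          mul_le_mul_of_nonneg_right hpx (sq_nonneg (q x + q'' x / 2)),
          mul_le_mul_of_nonneg_right hqx (sq_nonneg (p x + p'' x / 2))]
    _ = H2norm p ^ 2 * (∫ x in (0:ℝ)..1, (q x + q'' x / 2) ^ 2)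
        + H2norm q ^ 2 * ∫ x in (0:ℝ)..1, (p x + p'' x / 2) ^ 2 := by
        rw [intervalIntegral.integral_add ((by fun_prop : Continuous _).intervalIntegrable _ _)
          ((by fun_prop : Continuous _).intervalIntegrable _ _),
          intervalIntegral.integral_const_mul, intervalIntegral.integral_const_mul]
    _ ≤ H2norm p ^ 2 * H2norm q ^ 2 + H2norm q ^ 2 * H2norm p ^ 2 := by
        gcongr
        · exact integral_half_le hq hq' hq'' hq0 hq1
        · exact integral_half_le hp hp' hp'' hp0 hp1
    _ = 2 * H2norm p ^ 2 * H2norm q ^ 2 := by ring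

lemma H2norm_neg_convGExtDeriv_sq_le {h h' : ℝ → ℝ} (hh : ∀ x, HasDerivAt h (h' x) x)
    (hh' : Continuous h') (h0 : h 0 = 0) (h1 : h 1 = 0) :
    H2norm (fun x => -convGExtDeriv h x) ^ 2 ≤ ∫ x in (0:ℝ)..1, h' x ^ 2 := by
  have hc := continuous_of_hasDerivAt hh
  have hV := hasDerivAt_convGExt hc
  have hW := hasDerivAt_convGExtDeriv hc
  rw [H2norm_sq_of_hasDerivAt (fun x => ((hW x).fun_neg).congr_deriv (neg_sub _ _))
    (fun x => (hh x).sub (hV x)) (hh'.sub (continuous_of_hasDerivAt hW))]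
  simpa only [neg_sq] using integral_energy_le zero_le_one hh hh' hV hW h0 h1
    (convGExt_one hc) (convGExtDeriv_one hc)

lemma H2norm_fCH_sub_sq_le {u z : ℝ → ℝ} (hu : ContDiff ℝ 2 u) (hz : ContDiff ℝ 2 z)
    (hu0 : u 0 = 0) (hu1 : u 1 = 0) (hu0' : deriv u 0 = 0) (hu1' : deriv u 1 = 0)
    (hz0 : z 0 = 0) (hz1 : z 1 = 0) (hz0' : deriv z 0 = 0) (hz1' : deriv z 1 = 0) :
    H2norm (fun x => fCH u x - fCH z x) ^ 2 ≤ ∫ x in (0:ℝ)..1, (deriv u x * (2 * u x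
      + deriv (deriv u) x) - deriv z x * (2 * z x + deriv (deriv z) x)) ^ 2 := by
  obtain ⟨Hu, Hu', Hu''⟩ := hasDerivAt_deriv_of_contDiff_two hu
  obtain ⟨Hz, Hz', Hz''⟩ := hasDerivAt_deriv_of_contDiff_two hz
  have := continuous_of_hasDerivAt Hu
  have := continuous_of_hasDerivAt Hu'
  have := continuous_of_hasDerivAt Hz
  have := continuous_of_hasDerivAt Hz'
  have Hwu x := hasDerivAt_sq_add_half_sq (Hu x) (Hu' x)
  have Hwz x := hasDerivAt_sq_add_half_sq (Hz x) (Hz' x)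
  have cwu := continuous_of_hasDerivAt Hwu
  have cwz := continuous_of_hasDerivAt Hwz
  set h := fun y => (u y ^ 2 + 1/2 * deriv u y ^ 2) - (z y ^ 2 + 1/2 * deriv z y ^ 2) with h_def
  have hF : EqOn (fun x => fCH u x - fCH z x) (fun x => -convGExtDeriv h x) (Ioo 0 1) :=
    fun x hx => by
      simp only [fCH, (hasDerivAt_convG cwu hx).deriv, (hasDerivAt_convG cwz hx).deriv,
        h_def, convGExtDeriv_sub cwu cwz hx]
      ring
  rw [H2norm_congr_Ioo hF]
  exact H2norm_neg_convGExtDeriv_sq_le (fun x => (Hwu x).fun_sub (Hwz x)) (by fun_prop)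
    (by simp [h_def, hu0, hu0', hz0, hz0']) (by simp [h_def, hu1, hu1', hz1, hz1'])

-- The integrand is `(p q + ½ p' q')'` with `p = u - z`, `q = u + z`.
lemma integral_sq_deriv_sub_le {u z : ℝ → ℝ} (hu : ContDiff ℝ 2 u) (hz : ContDiff ℝ 2 z)
    (hu0 : u 0 = 0) (hu1 : u 1 = 0) (hu0' : deriv u 0 = 0) (hu1' : deriv u 1 = 0)
    (hz0 : z 0 = 0) (hz1 : z 1 = 0) (hz0' : deriv z 0 = 0) (hz1' : deriv z 1 = 0) :
    ∫ x in (0:ℝ)..1, (deriv u x * (2 * u x + deriv (deriv u) x)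
      - deriv z x * (2 * z x + deriv (deriv z) x)) ^ 2
      ≤ 2 * H2norm (fun x => u x - z x) ^ 2 * H2norm (fun x => u x + z x) ^ 2 := by
  obtain ⟨Hu, Hu', Hu''⟩ := hasDerivAt_deriv_of_contDiff_two hu
  obtain ⟨Hz, Hz', Hz''⟩ := hasDerivAt_deriv_of_contDiff_two hz
  refine le_of_eq_of_le (intervalIntegral.integral_congr fun x _ => by ring)
    (integral_sq_le_two_mul_H2norm_sq (fun x => (Hu x).fun_sub (Hz x))
      (fun x => (Hu' x).fun_sub (Hz' x)) (Hu''.sub Hz'') (fun x => (Hu x).fun_add (Hz x))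
      (fun x => (Hu' x).fun_add (Hz' x)) (Hu''.add Hz'') ?_ ?_ ?_ ?_ ?_ ?_ ?_ ?_) <;>
    simp [hu0, hu1, hu0', hu1', hz0, hz1, hz0', hz1']

/-- Lipschitz estimate for `f(u) = -∂ₓ(G*(u² + ½uₓ²))` in `H²`. -/
theorem stmt4 (u z : ℝ → ℝ) (hu : ContDiff ℝ 2 u) (hz : ContDiff ℝ 2 z)
    (hu0 : u 0 = 0) (hu1 : u 1 = 0) (hu0' : deriv u 0 = 0) (hu1' : deriv u 1 = 0)
    (hz0 : z 0 = 0) (hz1 : z 1 = 0) (hz0' : deriv z 0 = 0) (hz1' : deriv z 1 = 0) :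
    H2norm (fun x => fCH u x - fCH z x)
      ≤ (3/2) * (H2norm u + H2norm z) * H2norm (fun x => u x - z x) := by
  obtain ⟨Hu, Hu', Hu''⟩ := hasDerivAt_deriv_of_contDiff_two hu
  obtain ⟨Hz, Hz', Hz''⟩ := hasDerivAt_deriv_of_contDiff_two hz
  have := H2norm_nonneg u
  have := H2norm_nonneg z
  have := H2norm_nonneg (fun x => u x - z x)
  have := H2norm_nonneg (fun x => u x + z x)
  rw [← sq_le_sq₀ (H2norm_nonneg _) (by positivity)]
  calc _ ≤ _ := H2norm_fCH_sub_sq_le hu hz hu0 hu1 hu0' hu1' hz0 hz1 hz0' hz1'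
    _ ≤ _ := integral_sq_deriv_sub_le hu hz hu0 hu1 hu0' hu1' hz0 hz1 hz0' hz1'
    _ ≤ 2 * H2norm (fun x => u x - z x) ^ 2 * (H2norm u + H2norm z) ^ 2 := by
      gcongr
      exact H2norm_add_le Hu Hu' Hu'' Hz Hz' Hz''
    _ ≤ _ := by nlinarith [sq_nonneg ((H2norm u + H2norm z) * H2norm (fun x => u x - z x))]
end

section
/- For u in H^2(0,1) with zero boundary data, f(u) = -∂_x(G * (u^2 + (1/2)u_x^2)) satisfies ‖f(u)‖_{H^2} ≤ (3/2)‖u‖_{H^2}^2. -/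
/-!
Write `h = u² + u_x²/2` and `W = G * h`. Splitting the kernel `cosh (fract (x - y) - 1/2)` into
the exponentials `e^{±(x - y)}` shows that on `(0,1)` the function `W` is the periodic solution
of `W'' = W - h`: it is smooth, `W(1) = W(0)` and `W'(1) = W'(0)`. Since `f(u) = -W'`, we get
`f(u)' = h - W` and `f(u)'' = h' - W'`.

Integrating `(W W')' = W'² + W (W - h)` over a period gives `‖W'‖² + ‖W - h‖² ≤ ‖h‖²`; the same
argument applied to `(W', W - h, h')`, which satisfies the same system, gives
`‖W - h‖² + ‖W' - h'‖² ≤ ‖h'‖²`. Hence `‖f(u)‖_{H²} ≤ ‖h‖_{H¹}`.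

Finally, as `u` and `u_x` vanish at `0`, `u² ≤ ‖u‖²_{H¹}` and `u_x² ≤ ‖u_x‖²_{H¹}` pointwise, and
`∫ u u_xx = -‖u_x‖²`. This bounds `‖h‖² ≤ sup h · ∫ h` and `‖h'‖² = ‖u_x (2u + u_xx)‖²` by a
quartic form in `‖u‖, ‖u_x‖, ‖u_xx‖` that is dominated by `(9/4) ‖u‖⁴_{H²}`.
-/

open MeasureTheory

open intervalIntegral Real Set

section GreenFunction

variable {h : ℝ → ℝ}

noncomputable def expPrimitive (c : ℝ) (h : ℝ → ℝ) (x : ℝ) : ℝ :=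
  (∫ y in (0:ℝ)..x, exp (c * (y + 1/2)) * h y) + ∫ y in x..1, exp (c * (y - 1/2)) * h y

theorem hasDerivAt_expPrimitive (hh : Continuous h) (c x : ℝ) :
    HasDerivAt (expPrimitive c h) ((exp (c * (x + 1/2)) - exp (c * (x - 1/2))) * h x) x := by
  have h₁ : Continuous fun y => exp (c * (y + 1/2)) * h y := by fun_prop
  have h₂ : Continuous fun y => exp (c * (y - 1/2)) * h y := by fun_prop
  exact ((h₁.integral_hasStrictDerivAt 0 x).hasDerivAt.fun_add (integral_hasDerivAt_left
    (h₂.intervalIntegrable x 1) (h₂.stronglyMeasurableAtFilter _ _) h₂.continuousAt)).congr_deriv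
    (by ring)

theorem expPrimitive_zero (c : ℝ) : expPrimitive c h 0 = exp (-c) * expPrimitive c h 1 := by
  simp only [expPrimitive, integral_same, zero_add, add_zero,
    ← intervalIntegral.integral_const_mul]
  congr 1 with y
  rw [← mul_assoc, ← exp_add]
  ring_nf

/-- For `0 < x < 1` this is `∫₀¹ exp (-c (fract (x - y) - 1/2)) h y dy`; `convG h` is the sum of
the cases `c = ±1`, one for each exponential in `cosh`. -/
noncomputable def expConv (c : ℝ) (h : ℝ → ℝ) (x : ℝ) : ℝ := exp (-(c * x)) * expPrimitive c h x

theorem hasDerivAt_expConv (hh : Continuous h) (c x : ℝ) :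
    HasDerivAt (expConv c h) (-c * expConv c h x + 2 * sinh (c / 2) * h x) x := by
  have hexp : HasDerivAt (fun x => exp (-(c * x))) (exp (-(c * x)) * -c) x := by
    simpa using ((hasDerivAt_id x).const_mul c).neg.exp
  refine (hexp.fun_mul (hasDerivAt_expPrimitive hh c x)).congr_deriv ?_
  have hplus : exp (-(c * x)) * exp (c * (x + 1/2)) = exp (c / 2) := by rw [← exp_add]; ring_nf
  have hminus : exp (-(c * x)) * exp (c * (x - 1/2)) = exp (-(c / 2)) := by rw [← exp_add]; ring_nf
  rw [expConv, sinh_eq]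
  linear_combination h x * (hplus - hminus)

theorem expConv_one (c : ℝ) : expConv c h 1 = expConv c h 0 := by
  simp [expConv, expPrimitive_zero]

noncomputable def greenSol (h : ℝ → ℝ) (x : ℝ) : ℝ :=
  (expConv 1 h x + expConv (-1) h x) / (4 * sinh (1/2))

noncomputable def greenSolDeriv (h : ℝ → ℝ) (x : ℝ) : ℝ :=
  (expConv (-1) h x - expConv 1 h x) / (4 * sinh (1/2))

theorem hasDerivAt_greenSol (hh : Continuous h) (x : ℝ) :
    HasDerivAt (greenSol h) (greenSolDeriv h x) x := by
  refine (((hasDerivAt_expConv hh 1 x).fun_add (hasDerivAt_expConv hh (-1) x)).div_const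
    _).congr_deriv ?_
  rw [greenSolDeriv, neg_div, sinh_neg]
  ring

theorem hasDerivAt_greenSolDeriv (hh : Continuous h) (x : ℝ) :
    HasDerivAt (greenSolDeriv h) (greenSol h x - h x) x := by
  refine (((hasDerivAt_expConv hh (-1) x).fun_sub (hasDerivAt_expConv hh 1 x)).div_const
    _).congr_deriv ?_
  have : sinh (1/2) ≠ 0 := (sinh_pos_iff.mpr (by norm_num)).ne'
  rw [greenSol, neg_div, sinh_neg]
  field_simp
  ring

theorem greenSol_one : greenSol h 1 = greenSol h 0 := by
  simp only [greenSol, expConv_one]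

theorem greenSolDeriv_one : greenSolDeriv h 1 = greenSolDeriv h 0 := by
  simp only [greenSolDeriv, expConv_one]

theorem Gper_sub_mul_eq {x y z : ℝ} (hz : Int.fract (x - y) - 1/2 = x - z) (v : ℝ) :
    Gper (x - y) * v = (exp (-(1 * x)) * (exp (1 * z) * v)
      + exp (-(-1 * x)) * (exp (-1 * z) * v)) / (4 * sinh (1/2)) := by
  rw [Gper, hz, cosh_eq, ← mul_assoc, ← mul_assoc, ← exp_add, ← exp_add]
  ring_nf

theorem convG_eq_greenSol (hh : Continuous h) {x : ℝ} (hx : x ∈ Ioo 0 1) :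
    convG h x = greenSol h x := by
  obtain ⟨hx0, hx1⟩ := hx
  set s := 4 * sinh (1/2)
  have hleft : EqOn (fun y => Gper (x - y) * h y) (fun y => (exp (-(1 * x)) *
      (exp (1 * (y + 1/2)) * h y) + exp (-(-1 * x)) * (exp (-1 * (y + 1/2)) * h y)) / s)
      (Ioo 0 x) := fun y hy => Gper_sub_mul_eq (by
        rw [Int.fract_eq_self.mpr ⟨by linarith [hy.2], by linarith [hy.1]⟩]; ring) (h y)
  have hright : EqOn (fun y => Gper (x - y) * h y) (fun y => (exp (-(1 * x)) *
      (exp (1 * (y - 1/2)) * h y) + exp (-(-1 * x)) * (exp (-1 * (y - 1/2)) * h y)) / s)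
      (Ioo x 1) := fun y hy => Gper_sub_mul_eq (by
        rw [← Int.fract_add_one, Int.fract_eq_self.mpr ⟨by linarith [hy.2], by linarith [hy.1]⟩]
        ring) (h y)
  have hcl : Continuous fun y => (exp (-(1 * x)) * (exp (1 * (y + 1/2)) * h y)
      + exp (-(-1 * x)) * (exp (-1 * (y + 1/2)) * h y)) / s := by fun_prop
  have hcr : Continuous fun y => (exp (-(1 * x)) * (exp (1 * (y - 1/2)) * h y)
      + exp (-(-1 * x)) * (exp (-1 * (y - 1/2)) * h y)) / s := by fun_prop
  rw [convG, ← integral_add_adjacent_intervals (b := x)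
    ((intervalIntegrable_congr_uIoo (uIoo_of_le hx0.le ▸ hleft)).mpr
      (hcl.intervalIntegrable _ _))
    ((intervalIntegrable_congr_uIoo (uIoo_of_le hx1.le ▸ hright)).mpr
      (hcr.intervalIntegrable _ _)),
    integral_congr_Ioo_of_le hx0.le hleft, integral_congr_Ioo_of_le hx1.le hright]
  simp only [intervalIntegral.integral_div]
  rw [intervalIntegral.integral_add, intervalIntegral.integral_add]
  · simp only [intervalIntegral.integral_const_mul, greenSol, expConv, expPrimitive]
    ring
  all_goals exact Continuous.intervalIntegrable (by fun_prop) _ _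

end GreenFunction

theorem integral_sq_add_integral_sq_le_of_periodic {W V h : ℝ → ℝ} {a b : ℝ} (hab : a ≤ b)
    (hW : ∀ x, HasDerivAt W (V x) x) (hV : ∀ x, HasDerivAt V (W x - h x) x)
    (hh : Continuous h) (hWb : W b = W a) (hVb : V b = V a) :
    (∫ x in a..b, V x ^ 2) + ∫ x in a..b, (W x - h x) ^ 2 ≤ ∫ x in a..b, h x ^ 2 := by
  have hWc : Continuous W := continuous_iff_continuousAt.2 fun x => (hW x).continuousAt
  have hVc : Continuous V := continuous_iff_continuousAt.2 fun x => (hV x).continuousAt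
  have hparts : ∫ x in a..b, (V x ^ 2 + W x * (W x - h x)) = 0 := by
    rw [integral_eq_sub_of_hasDerivAt (f := fun x => W x * V x)
      (fun x _ => ((hW x).fun_mul (hV x)).congr_deriv (by ring))
      (Continuous.intervalIntegrable (by fun_prop) _ _), hWb, hVb, sub_self]
  calc (∫ x in a..b, V x ^ 2) + ∫ x in a..b, (W x - h x) ^ 2
      = ∫ x in a..b, (V x ^ 2 + (W x - h x) ^ 2) := by
        rw [intervalIntegral.integral_add] <;> exact Continuous.intervalIntegrable (by fun_prop) _ _
    _ ≤ ∫ x in a..b, (h x ^ 2 + 2 * (V x ^ 2 + W x * (W x - h x))) := by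
        refine integral_mono_on hab (Continuous.intervalIntegrable (by fun_prop) _ _)
          (Continuous.intervalIntegrable (by fun_prop) _ _) fun x _ => ?_
        nlinarith [sq_nonneg (W x), sq_nonneg (V x)]
    _ = ∫ x in a..b, h x ^ 2 := by
        rw [intervalIntegral.integral_add, intervalIntegral.integral_const_mul, hparts, mul_zero,
          add_zero] <;> exact Continuous.intervalIntegrable (by fun_prop) _ _

theorem H2norm_neg_deriv_convG_le {h : ℝ → ℝ} (hh : ContDiff ℝ 1 h) (hh1 : h 1 = h 0) :
    H2norm (fun x => -deriv (convG h) x) ≤ H1norm h := by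
  have hc : Continuous h := hh.continuous
  set W := greenSol h
  set V := greenSolDeriv h
  have hW := hasDerivAt_greenSol hc
  have hV := hasDerivAt_greenSolDeriv hc
  have hh' : ∀ x, HasDerivAt h (deriv h x) x :=
    fun x => (hh.differentiable one_ne_zero x).hasDerivAt
  have hconv : EqOn (convG h) W (Ioo 0 1) := fun x hx => convG_eq_greenSol hc hx
  have hf : EqOn (fun x => -deriv (convG h) x) (fun x => -V x) (Ioo 0 1) := fun x hx =>
    congrArg Neg.neg ((hconv.deriv isOpen_Ioo hx).trans (hW x).deriv)
  have hf' : EqOn (deriv fun x => -deriv (convG h) x) (fun x => -(W x - h x)) (Ioo 0 1) :=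
    fun x hx => (hf.deriv isOpen_Ioo hx).trans (hV x).neg.deriv
  have hf'' : EqOn (deriv (deriv fun x => -deriv (convG h) x)) (fun x => -(V x - deriv h x))
      (Ioo 0 1) :=
    fun x hx => (hf'.deriv isOpen_Ioo hx).trans ((hW x).sub (hh' x)).neg.deriv
  have e0 : ∫ x in (0:ℝ)..1, (-deriv (convG h) x) ^ 2 = ∫ x in (0:ℝ)..1, V x ^ 2 :=
    integral_congr_Ioo_of_le zero_le_one fun x hx => (congrArg (· ^ 2) (hf hx)).trans (neg_sq _)
  have e1 : ∫ x in (0:ℝ)..1, deriv (fun x => -deriv (convG h) x) x ^ 2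
      = ∫ x in (0:ℝ)..1, (W x - h x) ^ 2 :=
    integral_congr_Ioo_of_le zero_le_one fun x hx => (congrArg (· ^ 2) (hf' hx)).trans (neg_sq _)
  have e2 : ∫ x in (0:ℝ)..1, deriv (deriv fun x => -deriv (convG h) x) x ^ 2
      = ∫ x in (0:ℝ)..1, (V x - deriv h x) ^ 2 :=
    integral_congr_Ioo_of_le zero_le_one fun x hx => (congrArg (· ^ 2) (hf'' hx)).trans (neg_sq _)
  have hlow := integral_sq_add_integral_sq_le_of_periodic zero_le_one hW hV hc
    greenSol_one greenSolDeriv_one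
  have hhigh := integral_sq_add_integral_sq_le_of_periodic zero_le_one hV
    (fun x => (hW x).sub (hh' x)) (hh.continuous_deriv le_rfl) greenSolDeriv_one
    (by rw [greenSol_one, hh1])
  have hnonneg : 0 ≤ ∫ x in (0:ℝ)..1, (W x - h x) ^ 2 :=
    integral_nonneg zero_le_one fun x _ => sq_nonneg _
  rw [H2norm, H1norm, e0, e1, e2]
  exact sqrt_le_sqrt (by linarith)

theorem sq_le_integral_sq_add_integral_deriv_sq {v : ℝ → ℝ} {a b x : ℝ} (hv : ContDiff ℝ 1 v)
    (hva : v a = 0) (hx : x ∈ Icc a b) :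
    v x ^ 2 ≤ (∫ t in a..b, v t ^ 2) + ∫ t in a..b, deriv v t ^ 2 := by
  have hd : ∀ t, HasDerivAt v (deriv v t) t :=
    fun t => (hv.differentiable one_ne_zero t).hasDerivAt
  have hvc := hv.continuous
  have hdc := hv.continuous_deriv le_rfl
  calc v x ^ 2 = ∫ t in a..x, 2 * v t * deriv v t := by
        rw [integral_eq_sub_of_hasDerivAt (f := fun t => v t ^ 2)
          (fun t _ => ((hd t).fun_pow 2).congr_deriv (by ring))
          (Continuous.intervalIntegrable (by fun_prop) _ _), hva]
        ring
    _ ≤ ∫ t in a..x, (v t ^ 2 + deriv v t ^ 2) :=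
        integral_mono_on hx.1 (Continuous.intervalIntegrable (by fun_prop) _ _)
          (Continuous.intervalIntegrable (by fun_prop) _ _)
          fun t _ => by nlinarith [sq_nonneg (v t - deriv v t)]
    _ ≤ ∫ t in a..b, (v t ^ 2 + deriv v t ^ 2) :=
        integral_mono_interval le_rfl hx.1 hx.2 (Filter.Eventually.of_forall fun t => by positivity)
          (Continuous.intervalIntegrable (by fun_prop) _ _)
    _ = _ := intervalIntegral.integral_add (Continuous.intervalIntegrable (by fun_prop) _ _)
          (Continuous.intervalIntegrable (by fun_prop) _ _)

noncomputable def sqNormL2 (f : ℝ → ℝ) : ℝ := ∫ x in (0:ℝ)..1, f x ^ 2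

theorem sqNormL2_nonneg (f : ℝ → ℝ) : 0 ≤ sqNormL2 f :=
  integral_nonneg zero_le_one fun _ _ => sq_nonneg _

noncomputable def chDensity (u : ℝ → ℝ) (y : ℝ) : ℝ := u y ^ 2 + 1/2 * deriv u y ^ 2

section ChDensity

variable {u : ℝ → ℝ} (hu : ContDiff ℝ 2 u)
include hu

theorem contDiff_chDensity : ContDiff ℝ 1 (chDensity u) :=
  ((hu.of_le one_le_two).pow 2).add (contDiff_const.mul (hu.deriv'.pow 2))

theorem hasDerivAt_chDensity (x : ℝ) :
    HasDerivAt (chDensity u) (deriv u x * (2 * u x + deriv (deriv u) x)) x := by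
  have hu' : HasDerivAt u (deriv u x) x := (hu.differentiable two_ne_zero x).hasDerivAt
  have hu'' : HasDerivAt (deriv u) (deriv (deriv u) x) x :=
    (hu.deriv'.differentiable one_ne_zero x).hasDerivAt
  exact ((hu'.fun_pow 2).fun_add ((hu''.fun_pow 2).const_mul (1/2))).congr_deriv (by ring)

theorem integral_chDensity :
    ∫ x in (0:ℝ)..1, chDensity u x = sqNormL2 u + 1/2 * sqNormL2 (deriv u) := by
  have := hu.continuous
  have := hu.continuous_deriv one_le_two
  rw [sqNormL2, sqNormL2, ← intervalIntegral.integral_const_mul]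
  exact intervalIntegral.integral_add (Continuous.intervalIntegrable (by fun_prop) _ _)
    (Continuous.intervalIntegrable (by fun_prop) _ _)

theorem integral_mul_deriv_deriv (hu0 : u 0 = 0) (hu1 : u 1 = 0) :
    ∫ x in (0:ℝ)..1, u x * deriv (deriv u) x = -sqNormL2 (deriv u) := by
  have := hu.continuous_deriv one_le_two
  have := hu.deriv'.continuous_deriv le_rfl
  rw [integral_mul_deriv_eq_deriv_mul (fun x _ => (hu.differentiable two_ne_zero x).hasDerivAt)
    (fun x _ => (hu.deriv'.differentiable one_ne_zero x).hasDerivAt)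
    (Continuous.intervalIntegrable (by fun_prop) _ _)
    (Continuous.intervalIntegrable (by fun_prop) _ _), hu0, hu1, sqNormL2]
  simp only [sq, zero_mul, sub_self, zero_sub]

theorem sqNormL2_chDensity_le (hu0 : u 0 = 0) (hu0' : deriv u 0 = 0) :
    sqNormL2 (chDensity u) ≤ (sqNormL2 u + sqNormL2 (deriv u)
      + 1/2 * (sqNormL2 (deriv u) + sqNormL2 (deriv (deriv u))))
      * (sqNormL2 u + 1/2 * sqNormL2 (deriv u)) := by
  have hc := (contDiff_chDensity hu).continuous
  rw [sqNormL2, ← integral_chDensity hu, ← intervalIntegral.integral_const_mul]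
  refine integral_mono_on zero_le_one (Continuous.intervalIntegrable (by fun_prop) _ _)
    (Continuous.intervalIntegrable (by fun_prop) _ _) fun x hx => ?_
  have hu_sq := sq_le_integral_sq_add_integral_deriv_sq (hu.of_le one_le_two) hu0 hx
  have hu'_sq := sq_le_integral_sq_add_integral_deriv_sq hu.deriv' hu0' hx
  have hpos : 0 ≤ chDensity u x := by unfold chDensity; positivity
  have hle : chDensity u x ≤ sqNormL2 u + sqNormL2 (deriv u)
      + 1/2 * (sqNormL2 (deriv u) + sqNormL2 (deriv (deriv u))) := by
    unfold chDensity sqNormL2; linarith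
  nlinarith

theorem sqNormL2_deriv_chDensity_le (hu0 : u 0 = 0) (hu1 : u 1 = 0) (hu0' : deriv u 0 = 0) :
    sqNormL2 (deriv (chDensity u)) ≤ (sqNormL2 (deriv u) + sqNormL2 (deriv (deriv u)))
      * (4 * sqNormL2 u - 4 * sqNormL2 (deriv u) + sqNormL2 (deriv (deriv u))) := by
  have := hu.continuous
  have := hu.continuous_deriv one_le_two
  have := hu.deriv'.continuous_deriv le_rfl
  have := (contDiff_chDensity hu).continuous_deriv le_rfl
  have hexpand : ∫ x in (0:ℝ)..1, (2 * u x + deriv (deriv u) x) ^ 2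
      = 4 * sqNormL2 u - 4 * sqNormL2 (deriv u) + sqNormL2 (deriv (deriv u)) := by
    rw [sub_eq_add_neg, ← mul_neg, ← integral_mul_deriv_deriv hu hu0 hu1, sqNormL2, sqNormL2,
      ← intervalIntegral.integral_const_mul, ← intervalIntegral.integral_const_mul,
      ← intervalIntegral.integral_add, ← intervalIntegral.integral_add]
    · exact integral_congr fun x _ => by ring
    all_goals exact Continuous.intervalIntegrable (by fun_prop) _ _
  rw [sqNormL2, ← hexpand, ← intervalIntegral.integral_const_mul]
  refine integral_mono_on zero_le_one (Continuous.intervalIntegrable (by fun_prop) _ _)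
    (Continuous.intervalIntegrable (by fun_prop) _ _) fun x hx => ?_
  have hu'_sq := sq_le_integral_sq_add_integral_deriv_sq hu.deriv' hu0' hx
  rw [(hasDerivAt_chDensity hu x).deriv, mul_pow]
  exact mul_le_mul_of_nonneg_right hu'_sq (sq_nonneg _)

end ChDensity

theorem H1norm_chDensity_le {u : ℝ → ℝ} (hu : ContDiff ℝ 2 u) (hu0 : u 0 = 0) (hu1 : u 1 = 0)
    (hu0' : deriv u 0 = 0) : H1norm (chDensity u) ≤ 3/2 * H2norm u ^ 2 := by
  have hX := sqNormL2_chDensity_le hu hu0 hu0'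
  have hY := sqNormL2_deriv_chDensity_le hu hu0 hu1 hu0'
  have ha := sqNormL2_nonneg u
  have hb := sqNormL2_nonneg (deriv u)
  have hc := sqNormL2_nonneg (deriv (deriv u))
  have hH2 : H2norm u ^ 2 = sqNormL2 u + sqNormL2 (deriv u) + sqNormL2 (deriv (deriv u)) :=
    sq_sqrt (by positivity)
  rw [hH2, H1norm, sqrt_le_iff]
  refine ⟨by positivity, ?_⟩
  change sqNormL2 _ + sqNormL2 _ ≤ _
  nlinarith [mul_nonneg ha hb, mul_nonneg ha hc, mul_nonneg hb hc,
    sq_nonneg (sqNormL2 u - sqNormL2 (deriv u))]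

/-- Bound `‖f(u)‖_{H²} ≤ (3/2)‖u‖_{H²}²`. -/
theorem stmt5 (u : ℝ → ℝ) (hu : ContDiff ℝ 2 u)
    (hu0 : u 0 = 0) (hu1 : u 1 = 0) (hu0' : deriv u 0 = 0) (hu1' : deriv u 1 = 0) :
    H2norm (fCH u) ≤ (3/2) * (H2norm u)^2 :=
  (H2norm_neg_deriv_convG_le (contDiff_chDensity hu)
    (by simp [chDensity, hu0, hu1, hu0', hu1'])).trans (H1norm_chDensity_le hu hu0 hu1 hu0')
end

section
/- Let u(x,t) be a smooth solution on [0,1]×[0,T) of u_t + u u_x + ∂_x(G*(u^2 + (1/2)u_x^2)) + k u_x = 0 with boundary conditions u(0,t)=u(1,t)=u_x(0,t)=u_x(1,t)=0. Then the H^1 norm is conserved: ∫_0^1 (u^2 + u_x^2)(x,t) dx = ∫_0^1 (u_0^2 + (u_0)_x^2)(x) dx for all t ∈ [0,T). -/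
open MeasureTheory

set_option maxHeartbeats 1000000

section AuxCH
open Real

noncomputable def Afun (h : ℝ → ℝ) (x : ℝ) : ℝ := ∫ y in (0:ℝ)..x, Real.exp (-y) * h y
noncomputable def Bfun (h : ℝ → ℝ) (x : ℝ) : ℝ := ∫ y in (0:ℝ)..x, Real.exp y * h y

noncomputable def Qfun (h : ℝ → ℝ) (x : ℝ) : ℝ :=
  (Real.exp (x - 1/2) * Afun h x + Real.exp (1/2 - x) * Bfun h x
   + Real.exp (x + 1/2) * (Afun h 1 - Afun h x)
   + Real.exp (-x - 1/2) * (Bfun h 1 - Bfun h x)) / (4 * Real.sinh (1/2))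

noncomputable def Q1fun (h : ℝ → ℝ) (x : ℝ) : ℝ :=
  (Real.exp (x - 1/2) * Afun h x - Real.exp (1/2 - x) * Bfun h x
   + Real.exp (x + 1/2) * (Afun h 1 - Afun h x)
   - Real.exp (-x - 1/2) * (Bfun h 1 - Bfun h x)) / (4 * Real.sinh (1/2))

lemma hasDerivAt_Afun {h : ℝ → ℝ} (hh : Continuous h) (x : ℝ) :
    HasDerivAt (Afun h) (Real.exp (-x) * h x) x := by
  have hc : Continuous fun y => Real.exp (-y) * h y := by continuity
  exact intervalIntegral.integral_hasDerivAt_right (hc.intervalIntegrable _ _)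
    (hc.stronglyMeasurableAtFilter _ _) hc.continuousAt

lemma hasDerivAt_Bfun {h : ℝ → ℝ} (hh : Continuous h) (x : ℝ) :
    HasDerivAt (Bfun h) (Real.exp x * h x) x := by
  have hc : Continuous fun y => Real.exp y * h y := by continuity
  exact intervalIntegral.integral_hasDerivAt_right (hc.intervalIntegrable _ _)
    (hc.stronglyMeasurableAtFilter _ _) hc.continuousAt

lemma sinh_half_ne : (4 : ℝ) * Real.sinh (1/2) ≠ 0 := by
  have := Real.sinh_pos_iff.2 (by norm_num : (0:ℝ) < 1/2)
  positivity

lemma hasDerivAt_Qfun {h : ℝ → ℝ} (hh : Continuous h) (x : ℝ) :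
    HasDerivAt (Qfun h) (Q1fun h x) x := by
  have hA := hasDerivAt_Afun hh x
  have hB := hasDerivAt_Bfun hh x
  have h1 : HasDerivAt (fun x => Real.exp (x - 1/2)) (Real.exp (x - 1/2)) x := by
    simpa only [mul_one] using ((hasDerivAt_id' x).sub_const (1/2)).exp
  have h2 : HasDerivAt (fun x => Real.exp (1/2 - x)) (-Real.exp (1/2 - x)) x := by
    simpa only [mul_neg_one] using ((hasDerivAt_id' x).const_sub (1/2)).exp
  have h3 : HasDerivAt (fun x => Real.exp (x + 1/2)) (Real.exp (x + 1/2)) x := by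
    simpa only [mul_one] using ((hasDerivAt_id' x).add_const (1/2)).exp
  have h4 : HasDerivAt (fun x => Real.exp (-x - 1/2)) (-Real.exp (-x - 1/2)) x := by
    simpa only [mul_neg_one] using ((hasDerivAt_neg' x).sub_const (1/2)).exp
  have H := ((((h1.mul hA).add (h2.mul hB)).add
      (h3.mul ((hasDerivAt_const x (Afun h 1)).sub hA))).add
      (h4.mul ((hasDerivAt_const x (Bfun h 1)).sub hB))).div_const (4 * Real.sinh (1/2))
  convert H using 1 <;> try rfl
  unfold Q1fun
  rw [div_eq_div_iff sinh_half_ne sinh_half_ne]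
  simp only [Real.exp_sub, Real.exp_add, Real.exp_neg, Real.sinh_eq, Pi.sub_apply]
  field_simp
  ring

lemma hasDerivAt_Q1fun {h : ℝ → ℝ} (hh : Continuous h) (x : ℝ) :
    HasDerivAt (Q1fun h) (Qfun h x - h x) x := by
  have hA := hasDerivAt_Afun hh x
  have hB := hasDerivAt_Bfun hh x
  have h1 : HasDerivAt (fun x => Real.exp (x - 1/2)) (Real.exp (x - 1/2)) x := by
    simpa only [mul_one] using ((hasDerivAt_id' x).sub_const (1/2)).exp
  have h2 : HasDerivAt (fun x => Real.exp (1/2 - x)) (-Real.exp (1/2 - x)) x := by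
    simpa only [mul_neg_one] using ((hasDerivAt_id' x).const_sub (1/2)).exp
  have h3 : HasDerivAt (fun x => Real.exp (x + 1/2)) (Real.exp (x + 1/2)) x := by
    simpa only [mul_one] using ((hasDerivAt_id' x).add_const (1/2)).exp
  have h4 : HasDerivAt (fun x => Real.exp (-x - 1/2)) (-Real.exp (-x - 1/2)) x := by
    simpa only [mul_neg_one] using ((hasDerivAt_neg' x).sub_const (1/2)).exp
  have H := ((((h1.mul hA).sub (h2.mul hB)).add
      (h3.mul ((hasDerivAt_const x (Afun h 1)).sub hA))).sub
      (h4.mul ((hasDerivAt_const x (Bfun h 1)).sub hB))).div_const (4 * Real.sinh (1/2))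
  convert H using 1 <;> try rfl
  unfold Qfun
  rw [div_sub' sinh_half_ne, div_eq_div_iff sinh_half_ne sinh_half_ne]
  simp only [Real.exp_sub, Real.exp_add, Real.exp_neg, Real.sinh_eq, Pi.sub_apply]
  field_simp
  ring


lemma continuous_Qfun {h : ℝ → ℝ} (hh : Continuous h) : Continuous (Qfun h) :=
  continuous_iff_continuousAt.2 fun x => (hasDerivAt_Qfun hh x).differentiableAt.continuousAt

lemma continuous_Q1fun {h : ℝ → ℝ} (hh : Continuous h) : Continuous (Q1fun h) :=
  continuous_iff_continuousAt.2 fun x => (hasDerivAt_Q1fun hh x).differentiableAt.continuousAt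

lemma convG_eq {h : ℝ → ℝ} (hh : Continuous h) {x : ℝ} (hx : x ∈ Set.Icc (0:ℝ) 1) :
    convG h x = Qfun h x := by
  obtain ⟨hx0, hx1⟩ := hx
  set g1 : ℝ → ℝ := fun y => Real.cosh (x - y - 1/2) / (2 * Real.sinh (1/2)) * h y with hg1
  set g2 : ℝ → ℝ := fun y => Real.cosh (x - y + 1/2) / (2 * Real.sinh (1/2)) * h y with hg2
  have hg1c : Continuous g1 := by
    apply Continuous.mul _ hh
    exact (Real.continuous_cosh.comp (by continuity)).div_const _
  have hg2c : Continuous g2 := by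
    apply Continuous.mul _ hh
    exact (Real.continuous_cosh.comp (by continuity)).div_const _
  have pw1 : ∀ y ∈ Set.Ioc (0:ℝ) x, Gper (x - y) * h y = g1 y := by
    intro y hy
    have : Int.fract (x - y) = x - y :=
      Int.fract_eq_self.2 ⟨by linarith [hy.2], by linarith [hy.1]⟩
    simp only [Gper, hg1, this]
  have pw2 : ∀ y ∈ Set.Ioc x 1, Gper (x - y) * h y = g2 y := by
    intro y hy
    have hfr : Int.fract (x - y) = x - y + 1 := by
      rw [← Int.fract_add_one (x - y)]
      exact Int.fract_eq_self.2 ⟨by linarith [hy.2], by linarith [hy.1]⟩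
    simp only [Gper, hg2, hfr]
    norm_num
    left
    congr 1
    ring
  have ig1 : IntervalIntegrable (fun y => Gper (x - y) * h y) volume 0 x := by
    rw [intervalIntegrable_iff_integrableOn_Ioc_of_le hx0]
    refine (hg1c.integrableOn_Ioc).congr ?_
    exact (ae_restrict_iff' measurableSet_Ioc).2 (Filter.Eventually.of_forall
      fun y hy => (pw1 y hy).symm)
  have ig2 : IntervalIntegrable (fun y => Gper (x - y) * h y) volume x 1 := by
    rw [intervalIntegrable_iff_integrableOn_Ioc_of_le hx1]
    refine (hg2c.integrableOn_Ioc).congr ?_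
    exact (ae_restrict_iff' measurableSet_Ioc).2 (Filter.Eventually.of_forall
      fun y hy => (pw2 y hy).symm)
  have split : convG h x = (∫ y in (0:ℝ)..x, Gper (x - y) * h y)
      + ∫ y in x..(1:ℝ), Gper (x - y) * h y :=
    (intervalIntegral.integral_add_adjacent_intervals ig1 ig2).symm
  have e1 : (∫ y in (0:ℝ)..x, Gper (x - y) * h y) = ∫ y in (0:ℝ)..x, g1 y := by
    refine intervalIntegral.integral_congr_ae ?_
    rw [Set.uIoc_of_le hx0]
    exact Filter.Eventually.of_forall pw1
  have e2 : (∫ y in x..(1:ℝ), Gper (x - y) * h y) = ∫ y in x..(1:ℝ), g2 y := by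
    refine intervalIntegral.integral_congr_ae ?_
    rw [Set.uIoc_of_le hx1]
    exact Filter.Eventually.of_forall pw2
  have c1 : Continuous fun y : ℝ => Real.exp (-y) * h y := by continuity
  have c2 : Continuous fun y : ℝ => Real.exp y * h y := by continuity
  have I1 : (∫ y in (0:ℝ)..x, g1 y)
      = Real.exp (x - 1/2) / (4 * Real.sinh (1/2)) * Afun h x
        + Real.exp (1/2 - x) / (4 * Real.sinh (1/2)) * Bfun h x := by
    have : (∫ y in (0:ℝ)..x, g1 y)
        = ∫ y in (0:ℝ)..x, (Real.exp (x - 1/2) / (4 * Real.sinh (1/2)) * (Real.exp (-y) * h y)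
          + Real.exp (1/2 - x) / (4 * Real.sinh (1/2)) * (Real.exp y * h y)) := by
      refine intervalIntegral.integral_congr fun y _ => ?_
      simp only [hg1, Real.cosh_eq, Real.exp_sub, Real.exp_add, Real.exp_neg]
      field_simp
      ring
    rw [this, intervalIntegral.integral_add ((c1.intervalIntegrable _ _).const_mul _)
      ((c2.intervalIntegrable _ _).const_mul _),
      intervalIntegral.integral_const_mul, intervalIntegral.integral_const_mul]
    rfl
  have I2 : (∫ y in x..(1:ℝ), g2 y)
      = Real.exp (x + 1/2) / (4 * Real.sinh (1/2)) * (Afun h 1 - Afun h x)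
        + Real.exp (-x - 1/2) / (4 * Real.sinh (1/2)) * (Bfun h 1 - Bfun h x) := by
    have : (∫ y in x..(1:ℝ), g2 y)
        = ∫ y in x..(1:ℝ), (Real.exp (x + 1/2) / (4 * Real.sinh (1/2)) * (Real.exp (-y) * h y)
          + Real.exp (-x - 1/2) / (4 * Real.sinh (1/2)) * (Real.exp y * h y)) := by
      refine intervalIntegral.integral_congr fun y _ => ?_
      simp only [hg2, Real.cosh_eq, Real.exp_sub, Real.exp_add, Real.exp_neg]
      field_simp
      ring
    rw [this, intervalIntegral.integral_add ((c1.intervalIntegrable _ _).const_mul _)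
      ((c2.intervalIntegrable _ _).const_mul _),
      intervalIntegral.integral_const_mul, intervalIntegral.integral_const_mul]
    have a1 : (∫ y in x..(1:ℝ), Real.exp (-y) * h y) = Afun h 1 - Afun h x :=
      (intervalIntegral.integral_interval_sub_left (c1.intervalIntegrable _ _)
        (c1.intervalIntegrable _ _)).symm
    have b1 : (∫ y in x..(1:ℝ), Real.exp y * h y) = Bfun h 1 - Bfun h x :=
      (intervalIntegral.integral_interval_sub_left (c2.intervalIntegrable _ _)
        (c2.intervalIntegrable _ _)).symm
    rw [a1, b1]
  rw [split, e1, e2, I1, I2]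
  unfold Qfun
  field_simp
  ring

lemma deriv_convG {h : ℝ → ℝ} (hh : Continuous h) {x : ℝ} (hx : x ∈ Set.Ioo (0:ℝ) 1) :
    deriv (convG h) x = Q1fun h x := by
  have hev : convG h =ᶠ[nhds x] Qfun h := by
    filter_upwards [Ioo_mem_nhds hx.1 hx.2] with y hy
    exact convG_eq hh ⟨le_of_lt hy.1, le_of_lt hy.2⟩
  rw [hev.deriv_eq, (hasDerivAt_Qfun hh x).deriv]

noncomputable def pdX (U : ℝ × ℝ → ℝ) : ℝ × ℝ → ℝ := fun p => fderiv ℝ U p (1, 0)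
noncomputable def pdT (U : ℝ × ℝ → ℝ) : ℝ × ℝ → ℝ := fun p => fderiv ℝ U p (0, 1)

lemma contDiff_pdX {U : ℝ × ℝ → ℝ} (hU : ContDiff ℝ (⊤ : ℕ∞) U) : ContDiff ℝ (⊤ : ℕ∞) (pdX U) := by
  have h1 : ContDiff ℝ (⊤ : ℕ∞) (fderiv ℝ U) := hU.fderiv_right (by simp)
  exact (ContinuousLinearMap.apply ℝ ℝ ((1:ℝ), (0:ℝ))).contDiff.comp h1

lemma contDiff_pdT {U : ℝ × ℝ → ℝ} (hU : ContDiff ℝ (⊤ : ℕ∞) U) : ContDiff ℝ (⊤ : ℕ∞) (pdT U) := by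
  have h1 : ContDiff ℝ (⊤ : ℕ∞) (fderiv ℝ U) := hU.fderiv_right (by simp)
  exact (ContinuousLinearMap.apply ℝ ℝ ((0:ℝ), (1:ℝ))).contDiff.comp h1

lemma hasDerivAt_sectX {U : ℝ × ℝ → ℝ} (hU : ContDiff ℝ (⊤ : ℕ∞) U) (x t : ℝ) :
    HasDerivAt (fun s => U (s, t)) (pdX U (x, t)) x := by
  have hF : HasFDerivAt U (fderiv ℝ U (x, t)) (x, t) :=
    (hU.differentiable (by simp) (x, t)).hasFDerivAt
  have hγ : HasDerivAt (fun s : ℝ => (s, t)) ((1:ℝ), (0:ℝ)) x := by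
    simpa using (hasDerivAt_id x).prodMk (hasDerivAt_const x t)
  exact hF.comp_hasDerivAt x hγ

lemma hasDerivAt_sectT {U : ℝ × ℝ → ℝ} (hU : ContDiff ℝ (⊤ : ℕ∞) U) (x t : ℝ) :
    HasDerivAt (fun τ => U (x, τ)) (pdT U (x, t)) t := by
  have hF : HasFDerivAt U (fderiv ℝ U (x, t)) (x, t) :=
    (hU.differentiable (by simp) (x, t)).hasFDerivAt
  have hγ : HasDerivAt (fun τ : ℝ => (x, τ)) ((0:ℝ), (1:ℝ)) t := by
    simpa using (hasDerivAt_const t x).prodMk (hasDerivAt_id t)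
  exact hF.comp_hasDerivAt t hγ

lemma pd_symm {U : ℝ × ℝ → ℝ} (hU : ContDiff ℝ (⊤ : ℕ∞) U) (p : ℝ × ℝ) :
    pdT (pdX U) p = pdX (pdT U) p := by
  have hsym : IsSymmSndFDerivAt ℝ U p :=
    (hU.contDiffAt).isSymmSndFDerivAt (by rw [minSmoothness_of_isRCLikeNormedField]; exact WithTop.coe_le_coe.2 (le_top : (2:ℕ∞) ≤ ⊤))
  have hd2 : DifferentiableAt ℝ (fderiv ℝ U) p :=
    ((hU.fderiv_right (m := (⊤ : ℕ∞)) (by simp)).differentiable (by simp)) p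
  have hc1 : HasFDerivAt (pdX U)
      ((ContinuousLinearMap.apply ℝ ℝ ((1:ℝ), (0:ℝ))).comp (fderiv ℝ (fderiv ℝ U) p)) p :=
    (ContinuousLinearMap.apply ℝ ℝ ((1:ℝ), (0:ℝ))).hasFDerivAt.comp p hd2.hasFDerivAt
  have hc2 : HasFDerivAt (pdT U)
      ((ContinuousLinearMap.apply ℝ ℝ ((0:ℝ), (1:ℝ))).comp (fderiv ℝ (fderiv ℝ U) p)) p :=
    (ContinuousLinearMap.apply ℝ ℝ ((0:ℝ), (1:ℝ))).hasFDerivAt.comp p hd2.hasFDerivAt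
  have e1 : pdT (pdX U) p = fderiv ℝ (fderiv ℝ U) p (0, 1) (1, 0) := by
    unfold pdT
    rw [hc1.fderiv]
    simp
  have e2 : pdX (pdT U) p = fderiv ℝ (fderiv ℝ U) p (1, 0) (0, 1) := by
    unfold pdX
    rw [hc2.fderiv]
    simp
  rw [e1, e2, hsym.eq]

end AuxCH

/-- Conservation of the `H¹` norm for smooth solutions of the generalized
Camassa–Holm equation with homogeneous boundary conditions. -/
theorem stmt10 (k T : ℝ) (hT : 0 < T) (u : ℝ → ℝ → ℝ)
    (hsm : ContDiff ℝ (⊤ : ℕ∞) (fun p : ℝ × ℝ => u p.1 p.2))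
    (heq : ∀ x ∈ Set.Icc (0:ℝ) 1, ∀ t ∈ Set.Ico (0:ℝ) T,
      deriv (fun τ => u x τ) t + u x t * deriv (fun s => u s t) x
        + deriv (convG fun y => (u y t)^2 + (1/2) * (deriv (fun r => u r t) y)^2) x
        + k * deriv (fun s => u s t) x = 0)
    (hbc : ∀ t ∈ Set.Ico (0:ℝ) T,
      u 0 t = 0 ∧ u 1 t = 0 ∧
      deriv (fun s => u s t) 0 = 0 ∧ deriv (fun s => u s t) 1 = 0) :
    ∀ t ∈ Set.Ico (0:ℝ) T,
      (∫ x in (0:ℝ)..1, ((u x t)^2 + (deriv (fun s => u s t) x)^2))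
        = ∫ x in (0:ℝ)..1, ((u x 0)^2 + (deriv (fun s => u s 0) x)^2) := by
  set U : ℝ × ℝ → ℝ := fun p => u p.1 p.2 with hUdef
  -- basic derivative facts
  have hX : ∀ x t : ℝ, HasDerivAt (fun s => u s t) (pdX U (x, t)) x :=
    fun x t => hasDerivAt_sectX hsm x t
  have hT2 : ∀ x t : ℝ, HasDerivAt (fun τ => u x τ) (pdT U (x, t)) t :=
    fun x t => hasDerivAt_sectT hsm x t
  have hXd : ∀ x t : ℝ, deriv (fun s => u s t) x = pdX U (x, t) :=
    fun x t => (hX x t).deriv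
  have hTd : ∀ x t : ℝ, deriv (fun τ => u x τ) t = pdT U (x, t) :=
    fun x t => (hT2 x t).deriv
  -- continuity facts
  have cU : Continuous U := hsm.continuous
  have cUX : Continuous (pdX U) := (contDiff_pdX hsm).continuous
  have cUT : Continuous (pdT U) := (contDiff_pdT hsm).continuous
  have cUXX : Continuous (pdX (pdX U)) := (contDiff_pdX (contDiff_pdX hsm)).continuous
  have cUXT : Continuous (pdT (pdX U)) := (contDiff_pdT (contDiff_pdX hsm)).continuous
  set E : ℝ → ℝ := fun σ => ∫ x in (0:ℝ)..1, ((U (x, σ))^2 + (pdX U (x, σ))^2) with hEdef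
  -- derivative of E is zero on [0, T)
  have hE0 : ∀ τ ∈ Set.Ico (0:ℝ) T, HasDerivAt E 0 τ := by
    intro τ hτ
    set h : ℝ → ℝ := fun y => (U (y, τ))^2 + (1/2) * (pdX U (y, τ))^2 with hhdef
    have hsec : ∀ g : ℝ × ℝ → ℝ, Continuous g → ∀ σ : ℝ, Continuous (fun y : ℝ => g (y, σ)) :=
      fun g hg σ => hg.comp (continuous_id.prodMk continuous_const)
    have hhc : Continuous h :=
      (((hsec U cU τ).pow 2).add (continuous_const.mul ((hsec (pdX U) cUX τ).pow 2)))
    -- the PDE, rewritten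
    have hut : ∀ z ∈ Set.Icc (0:ℝ) 1, pdT U (z, τ)
        = -(U (z, τ) * pdX U (z, τ) + deriv (convG h) z + k * pdX U (z, τ)) := by
      intro z hz
      have h0 := heq z hz τ hτ
      have harg : (fun y => (u y τ)^2 + (1/2) * (deriv (fun r => u r τ) y)^2) = h := by
        funext y
        rw [hXd y τ]
      rw [hTd z τ, hXd z τ, harg] at h0
      linarith
    have hutIoo : ∀ z ∈ Set.Ioo (0:ℝ) 1, pdT U (z, τ)
        = -(U (z, τ) * pdX U (z, τ) + Q1fun h z + k * pdX U (z, τ)) := by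
      intro z hz
      rw [hut z ⟨le_of_lt hz.1, le_of_lt hz.2⟩, deriv_convG hhc hz]
    -- section derivatives in x
    have hXs : ∀ z : ℝ, HasDerivAt (fun s => U (s, τ)) (pdX U (z, τ)) z :=
      fun z => hasDerivAt_sectX hsm z τ
    have hXXs : ∀ z : ℝ, HasDerivAt (fun s => pdX U (s, τ)) (pdX (pdX U) (z, τ)) z :=
      fun z => hasDerivAt_sectX (contDiff_pdX hsm) z τ
    -- derivative of the right-hand side R
    have hR : ∀ z : ℝ, HasDerivAt
        (fun z => -(U (z, τ) * pdX U (z, τ) + Q1fun h z + k * pdX U (z, τ)))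
        (-((pdX U (z, τ) * pdX U (z, τ) + U (z, τ) * pdX (pdX U) (z, τ))
          + (Qfun h z - h z) + k * pdX (pdX U) (z, τ))) z := by
      intro z
      exact ((((hXs z).mul (hXXs z)).add (hasDerivAt_Q1fun hhc z)).add
        ((hXXs z).const_mul k)).neg
    -- mixed partial on the interior
    have hmix : ∀ x ∈ Set.Ioo (0:ℝ) 1, pdT (pdX U) (x, τ)
        = -((pdX U (x, τ) * pdX U (x, τ) + U (x, τ) * pdX (pdX U) (x, τ))
          + (Qfun h x - h x) + k * pdX (pdX U) (x, τ)) := by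
      intro x hx
      rw [pd_symm hsm (x, τ)]
      have h1 : pdX (pdT U) (x, τ) = deriv (fun s => pdT U (s, τ)) x :=
        (hasDerivAt_sectX (contDiff_pdT hsm) x τ).deriv.symm
      have hev : (fun s => pdT U (s, τ))
          =ᶠ[nhds x] fun z => -(U (z, τ) * pdX U (z, τ) + Q1fun h z + k * pdX U (z, τ)) := by
        filter_upwards [Ioo_mem_nhds hx.1 hx.2] with z hz
        exact hutIoo z hz
      rw [h1, hev.deriv_eq, (hR x).deriv]
    -- differentiation under the integral sign
    set F' : ℝ → ℝ → ℝ := fun σ x =>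
      2 * U (x, σ) * pdT U (x, σ) + 2 * pdX U (x, σ) * pdT (pdX U) (x, σ) with hF'def
    have cF' : Continuous fun q : ℝ × ℝ => F' q.1 q.2 := by
      have csw : Continuous fun q : ℝ × ℝ => (q.2, q.1) := by continuity
      exact ((continuous_const.mul (cU.comp csw)).mul (cUT.comp csw)).add
        ((continuous_const.mul (cUX.comp csw)).mul (cUXT.comp csw))
    obtain ⟨C, hC⟩ := (isCompact_Icc.prod isCompact_Icc :
        IsCompact ((Set.Icc (τ-1) (τ+1)) ×ˢ (Set.Icc (0:ℝ) 1))).exists_bound_of_continuousOn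
      cF'.continuousOn
    have hEd : HasDerivAt E (∫ x in (0:ℝ)..1, F' τ x) τ := by
      refine (intervalIntegral.hasDerivAt_integral_of_dominated_loc_of_deriv_le
        (F := fun σ x => (U (x, σ))^2 + (pdX U (x, σ))^2) (F' := F')
        (bound := fun _ => C) (Metric.ball_mem_nhds τ one_pos) ?_ ?_ ?_ ?_ ?_ ?_).2
      · refine Filter.Eventually.of_forall fun σ => ?_
        exact ((((hsec U cU σ).pow 2).add ((hsec (pdX U) cUX σ).pow 2)).aestronglyMeasurable :
          AEStronglyMeasurable (fun x => (U (x, σ))^2 + (pdX U (x, σ))^2) _)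
      · exact (((hsec U cU τ).pow 2).add ((hsec (pdX U) cUX τ).pow 2)).intervalIntegrable _ _
      · exact ((cF'.comp (continuous_const.prodMk continuous_id)).aestronglyMeasurable).restrict
      · refine Filter.Eventually.of_forall fun x hx σ hσ => ?_
        rw [Set.uIoc_of_le (zero_le_one)] at hx
        refine hC (σ, x) ⟨?_, ⟨le_of_lt hx.1, hx.2⟩⟩
        have := Real.dist_eq σ τ ▸ Metric.mem_ball.1 hσ
        constructor <;> [linarith [abs_lt.1 this]; linarith [abs_lt.1 this]]
      · exact intervalIntegrable_const
      · refine Filter.Eventually.of_forall fun x hx σ hσ => ?_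
        have d1 : HasDerivAt (fun σ => U (x, σ)) (pdT U (x, σ)) σ := hasDerivAt_sectT hsm x σ
        have d2 : HasDerivAt (fun σ => pdX U (x, σ)) (pdT (pdX U) (x, σ)) σ :=
          hasDerivAt_sectT (contDiff_pdX hsm) x σ
        convert (d1.pow 2).add (d2.pow 2) using 1 <;> (try rfl) <;> (try simp [hF'def]) <;> ring_nf
    -- the integral of F' τ vanishes
    have hΦ : ∀ x : ℝ, HasDerivAt
        (fun x => -2 * U (x, τ) * Qfun h x - k * (U (x, τ))^2
          - U (x, τ) * (pdX U (x, τ))^2 - k * (pdX U (x, τ))^2)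
        ((-2 * pdX U (x, τ) * Qfun h x + -2 * U (x, τ) * Q1fun h x)
          - k * (2 * U (x, τ) * pdX U (x, τ))
          - (pdX U (x, τ) * (pdX U (x, τ))^2
            + U (x, τ) * (2 * pdX U (x, τ) * pdX (pdX U) (x, τ)))
          - k * (2 * pdX U (x, τ) * pdX (pdX U) (x, τ))) x := by
      intro x
      have p1 : HasDerivAt (fun x => -2 * U (x, τ) * Qfun h x)
          (-2 * pdX U (x, τ) * Qfun h x + -2 * U (x, τ) * Q1fun h x) x := by
        have := (((hXs x).const_mul (-2)).mul (hasDerivAt_Qfun hhc x))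
        convert this using 1 <;> (try rfl) <;> ring
      have p2 : HasDerivAt (fun x => k * (U (x, τ))^2) (k * (2 * U (x, τ) * pdX U (x, τ))) x := by
        have := ((hXs x).pow 2).const_mul k
        convert this using 1 <;> (try rfl) <;> ring
      have p3 : HasDerivAt (fun x => U (x, τ) * (pdX U (x, τ))^2)
          (pdX U (x, τ) * (pdX U (x, τ))^2
            + U (x, τ) * (2 * pdX U (x, τ) * pdX (pdX U) (x, τ))) x := by
        have := (hXs x).mul ((hXXs x).pow 2)
        convert this using 1 <;> (try rfl) <;> (try simp only [Pi.pow_apply]) <;> ring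
      have p4 : HasDerivAt (fun x => k * (pdX U (x, τ))^2)
          (k * (2 * pdX U (x, τ) * pdX (pdX U) (x, τ))) x := by
        have := ((hXXs x).pow 2).const_mul k
        convert this using 1 <;> (try rfl) <;> ring
      exact ((p1.sub p2).sub p3).sub p4
    have cΦd : Continuous (fun x : ℝ =>
        (-2 * pdX U (x, τ) * Qfun h x + -2 * U (x, τ) * Q1fun h x)
          - k * (2 * U (x, τ) * pdX U (x, τ))
          - (pdX U (x, τ) * (pdX U (x, τ))^2
            + U (x, τ) * (2 * pdX U (x, τ) * pdX (pdX U) (x, τ)))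
          - k * (2 * pdX U (x, τ) * pdX (pdX U) (x, τ))) := by
      have c1 := hsec U cU τ
      have c2 := hsec (pdX U) cUX τ
      have c3 := hsec (pdX (pdX U)) cUXX τ
      have cQ := continuous_Qfun hhc
      have cQ1 := continuous_Q1fun hhc
      fun_prop
    have hbcτ := hbc τ hτ
    have hu0 : U (0, τ) = 0 := hbcτ.1
    have hu1 : U (1, τ) = 0 := hbcτ.2.1
    have hux0 : pdX U (0, τ) = 0 := by rw [← hXd 0 τ]; exact hbcτ.2.2.1
    have hux1 : pdX U (1, τ) = 0 := by rw [← hXd 1 τ]; exact hbcτ.2.2.2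
    have intΦ : (∫ x in (0:ℝ)..1,
        ((-2 * pdX U (x, τ) * Qfun h x + -2 * U (x, τ) * Q1fun h x)
          - k * (2 * U (x, τ) * pdX U (x, τ))
          - (pdX U (x, τ) * (pdX U (x, τ))^2
            + U (x, τ) * (2 * pdX U (x, τ) * pdX (pdX U) (x, τ)))
          - k * (2 * pdX U (x, τ) * pdX (pdX U) (x, τ)))) = 0 := by
      rw [intervalIntegral.integral_eq_sub_of_hasDerivAt (fun x _ => hΦ x)
        (cΦd.intervalIntegrable _ _)]
      rw [hu0, hu1, hux0, hux1]
      ring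
    have hae1 : ∀ᵐ x : ℝ ∂volume, x ≠ 1 := by
      rw [ae_iff]
      simpa using measure_singleton (1 : ℝ)
    have intF0 : (∫ x in (0:ℝ)..1, F' τ x) = 0 := by
      refine Eq.trans (intervalIntegral.integral_congr_ae ?_) intΦ
      filter_upwards [hae1] with x hx1 hx
      rw [Set.uIoc_of_le (zero_le_one)] at hx
      have hxIoo : x ∈ Set.Ioo (0:ℝ) 1 := ⟨hx.1, lt_of_le_of_ne hx.2 hx1⟩
      have e1 := hutIoo x hxIoo
      have e2 := hmix x hxIoo
      simp only [hF'def]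
      rw [e1, e2]
      simp only [hhdef]
      ring
    rw [← intF0]
    exact hEd
  -- conclude by the mean value theorem
  intro t ht
  have hred : ∀ σ : ℝ, (∫ x in (0:ℝ)..1, ((u x σ)^2 + (deriv (fun s => u s σ) x)^2)) = E σ := by
    intro σ
    refine intervalIntegral.integral_congr fun x _ => ?_
    rw [hXd x σ]
  rw [hred t, hred 0]
  have hcont : ContinuousOn E (Set.Icc 0 t) := fun σ hσ =>
    (hE0 σ ⟨hσ.1, lt_of_le_of_lt hσ.2 ht.2⟩).continuousAt.continuousWithinAt
  have hder : ∀ σ ∈ Set.Ico 0 t, HasDerivWithinAt E 0 (Set.Ici σ) σ := fun σ hσ =>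
    (hE0 σ ⟨hσ.1, hσ.2.trans ht.2⟩).hasDerivWithinAt
  exact constant_of_has_deriv_right_zero hcont hder t (Set.right_mem_Icc.2 ht.1)
end

section
/- For a smooth function u on [0,1] with u(0)=u(1)=u_x(0)=u_x(1)=0, the cubic boundary terms vanish: ∫_0^1 [ -u u_x (u - u_{xx}) - k u_x (u - u_{xx}) - ∂_x(G*(u^2+(1/2)u_x^2))(u - u_{xx}) ] dx = 0. -/
open MeasureTheory

open intervalIntegral

noncomputable def cG : ℝ := 1 / (2 * Real.sinh (1/2))
noncomputable def Acum (f : ℝ → ℝ) (x : ℝ) : ℝ := ∫ y in (0:ℝ)..x, Real.cosh y * f y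
noncomputable def Bcum (f : ℝ → ℝ) (x : ℝ) : ℝ := ∫ y in (0:ℝ)..x, Real.sinh y * f y

noncomputable def Ffun (f : ℝ → ℝ) (x : ℝ) : ℝ :=
  cG * (Real.cosh (x - 1/2) * Acum f x - Real.sinh (x - 1/2) * Bcum f x
      + Real.cosh (x + 1/2) * (Acum f 1 - Acum f x)
      - Real.sinh (x + 1/2) * (Bcum f 1 - Bcum f x))

noncomputable def Dfun (f : ℝ → ℝ) (x : ℝ) : ℝ :=
  cG * (Real.sinh (x - 1/2) * Acum f x - Real.cosh (x - 1/2) * Bcum f x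
      + Real.sinh (x + 1/2) * (Acum f 1 - Acum f x)
      - Real.cosh (x + 1/2) * (Bcum f 1 - Bcum f x))

lemma cG_mul : cG * (2 * Real.sinh (1/2)) = 1 := by
  have : Real.sinh (1/2) ≠ 0 := Real.sinh_ne_zero.mpr (by norm_num)
  field_simp [cG]
  simp [cG, this]

lemma hasDerivAt_Acum (f : ℝ → ℝ) (hf : Continuous f) (x : ℝ) :
    HasDerivAt (Acum f) (Real.cosh x * f x) x :=
  intervalIntegral.integral_hasDerivAt_right
    ((Real.continuous_cosh.mul hf).intervalIntegrable 0 x)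
    ((Real.continuous_cosh.mul hf).stronglyMeasurableAtFilter _ _)
    (Real.continuous_cosh.mul hf).continuousAt

lemma hasDerivAt_Bcum (f : ℝ → ℝ) (hf : Continuous f) (x : ℝ) :
    HasDerivAt (Bcum f) (Real.sinh x * f x) x :=
  intervalIntegral.integral_hasDerivAt_right
    ((Real.continuous_sinh.mul hf).intervalIntegrable 0 x)
    ((Real.continuous_sinh.mul hf).stronglyMeasurableAtFilter _ _)
    (Real.continuous_sinh.mul hf).continuousAt

lemma hasDerivAt_Ffun (f : ℝ → ℝ) (hf : Continuous f) (x : ℝ) :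
    HasDerivAt (Ffun f) (Dfun f x) x := by
  have hA := hasDerivAt_Acum f hf x
  have hB := hasDerivAt_Bcum f hf x
  have h1 : HasDerivAt (fun x : ℝ => Real.cosh (x - 1/2)) (Real.sinh (x - 1/2)) x := by
    simpa [Function.comp_def] using (Real.hasDerivAt_cosh (x - 1/2)).comp x ((hasDerivAt_id x).sub_const (1/2))
  have h2 : HasDerivAt (fun x : ℝ => Real.sinh (x - 1/2)) (Real.cosh (x - 1/2)) x := by
    simpa [Function.comp_def] using (Real.hasDerivAt_sinh (x - 1/2)).comp x ((hasDerivAt_id x).sub_const (1/2))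
  have h3 : HasDerivAt (fun x : ℝ => Real.cosh (x + 1/2)) (Real.sinh (x + 1/2)) x := by
    simpa [Function.comp_def] using (Real.hasDerivAt_cosh (x + 1/2)).comp x ((hasDerivAt_id x).add_const (1/2))
  have h4 : HasDerivAt (fun x : ℝ => Real.sinh (x + 1/2)) (Real.cosh (x + 1/2)) x := by
    simpa [Function.comp_def] using (Real.hasDerivAt_sinh (x + 1/2)).comp x ((hasDerivAt_id x).add_const (1/2))
  have hA' : HasDerivAt (fun x => Acum f 1 - Acum f x) (0 - Real.cosh x * f x) x :=
    (hasDerivAt_const x (Acum f 1)).sub hA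
  have hB' : HasDerivAt (fun x => Bcum f 1 - Bcum f x) (0 - Real.sinh x * f x) x :=
    (hasDerivAt_const x (Bcum f 1)).sub hB
  have H := ((((h1.mul hA).sub (h2.mul hB)).add (h3.mul hA')).sub (h4.mul hB')).const_mul cG
  refine H.congr_deriv ?_
  simp only [Dfun, Real.cosh_add, Real.cosh_sub, Real.sinh_add, Real.sinh_sub]
  ring

lemma hasDerivAt_Dfun (f : ℝ → ℝ) (hf : Continuous f) (x : ℝ) :
    HasDerivAt (Dfun f) (Ffun f x - f x) x := by
  have hA := hasDerivAt_Acum f hf x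
  have hB := hasDerivAt_Bcum f hf x
  have h1 : HasDerivAt (fun x : ℝ => Real.cosh (x - 1/2)) (Real.sinh (x - 1/2)) x := by
    simpa [Function.comp_def] using (Real.hasDerivAt_cosh (x - 1/2)).comp x ((hasDerivAt_id x).sub_const (1/2))
  have h2 : HasDerivAt (fun x : ℝ => Real.sinh (x - 1/2)) (Real.cosh (x - 1/2)) x := by
    simpa [Function.comp_def] using (Real.hasDerivAt_sinh (x - 1/2)).comp x ((hasDerivAt_id x).sub_const (1/2))
  have h3 : HasDerivAt (fun x : ℝ => Real.cosh (x + 1/2)) (Real.sinh (x + 1/2)) x := by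
    simpa [Function.comp_def] using (Real.hasDerivAt_cosh (x + 1/2)).comp x ((hasDerivAt_id x).add_const (1/2))
  have h4 : HasDerivAt (fun x : ℝ => Real.sinh (x + 1/2)) (Real.cosh (x + 1/2)) x := by
    simpa [Function.comp_def] using (Real.hasDerivAt_sinh (x + 1/2)).comp x ((hasDerivAt_id x).add_const (1/2))
  have hA' : HasDerivAt (fun x => Acum f 1 - Acum f x) (0 - Real.cosh x * f x) x :=
    (hasDerivAt_const x (Acum f 1)).sub hA
  have hB' : HasDerivAt (fun x => Bcum f 1 - Bcum f x) (0 - Real.sinh x * f x) x :=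
    (hasDerivAt_const x (Bcum f 1)).sub hB
  have H := ((((h2.mul hA).sub (h1.mul hB)).add (h4.mul hA')).sub (h3.mul hB')).const_mul cG
  refine H.congr_deriv ?_
  have hsq := Real.cosh_sq_sub_sinh_sq x
  have hc := cG_mul
  simp only [Ffun, Real.cosh_add, Real.cosh_sub, Real.sinh_add, Real.sinh_sub]
  linear_combination (-(f x * 2 * Real.sinh (1/2) * cG)) * hsq - f x * hc

lemma convG_eq_s11 (f : ℝ → ℝ) (hf : Continuous f) {x : ℝ} (hx : x ∈ Set.Ioo (0:ℝ) 1) :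
    convG f x = Ffun f x := by
  obtain ⟨hx0, hx1⟩ := hx
  -- the kernel on [0,x]
  have e1 : Set.EqOn (fun y => Gper (x - y) * f y)
      (fun y => (cG * Real.cosh (x - y - 1/2)) * f y) (Set.uIcc 0 x) := by
    intro y hy
    rw [Set.uIcc_of_le hx0.le] at hy
    have hfr : Int.fract (x - y) = x - y :=
      Int.fract_eq_self.mpr ⟨by simp at hy; linarith [hy.2], by simp at hy; linarith [hy.1]⟩
    simp only [Gper, hfr, cG]
    ring
  have e2 : Set.EqOn (fun y => Gper (x - y) * f y)
      (fun y => (cG * Real.cosh (x - y + 1/2)) * f y) (Set.uIcc x 1) := by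
    intro y hy
    rw [Set.uIcc_of_le hx1.le] at hy
    rcases eq_or_lt_of_le hy.1 with h | h
    · simp only [Gper, cG, ← h, sub_self, Int.fract_zero, zero_sub, Real.cosh_neg, zero_add]
      ring
    · have hfr : Int.fract (x - y) = x - y + 1 := by
        have : Int.fract (x - y + 1) = x - y + 1 :=
          Int.fract_eq_self.mpr ⟨by linarith [hy.2], by linarith⟩
        rw [← this, show x - y + 1 = x - y + (1:ℤ) by push_cast; ring, Int.fract_add_intCast]
      simp only [Gper, hfr, cG]
      rw [show x - y + 1 - 1/2 = x - y + 1/2 by ring]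
      ring
  have cont1 : ContinuousOn (fun y => Gper (x - y) * f y) (Set.uIcc 0 x) :=
    (((continuous_const.mul (Real.continuous_cosh.comp (by continuity))).mul hf)).continuousOn.congr e1
  have cont2 : ContinuousOn (fun y => Gper (x - y) * f y) (Set.uIcc x 1) :=
    (((continuous_const.mul (Real.continuous_cosh.comp (by continuity))).mul hf)).continuousOn.congr e2
  have split : convG f x = (∫ y in (0:ℝ)..x, Gper (x - y) * f y)
      + ∫ y in x..(1:ℝ), Gper (x - y) * f y := by
    rw [convG, ← intervalIntegral.integral_add_adjacent_intervals
      (cont1.intervalIntegrable) (cont2.intervalIntegrable)]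
  have i1 : (∫ y in (0:ℝ)..x, Gper (x - y) * f y)
      = cG * (Real.cosh (x - 1/2) * Acum f x - Real.sinh (x - 1/2) * Bcum f x) := by
    rw [intervalIntegral.integral_congr e1]
    have e1' : Set.EqOn (fun y => (cG * Real.cosh (x - y - 1/2)) * f y)
        (fun y => (cG * Real.cosh (x - 1/2)) * (Real.cosh y * f y)
          - (cG * Real.sinh (x - 1/2)) * (Real.sinh y * f y)) (Set.uIcc 0 x) := by
      intro y _
      beta_reduce
      rw [show x - y - 1/2 = (x - 1/2) - y from by ring, Real.cosh_sub]
      ring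
    rw [intervalIntegral.integral_congr e1',
      intervalIntegral.integral_sub
        ((show Continuous fun y => cG * Real.cosh (x - 1/2) * (Real.cosh y * f y) from continuous_const.mul (Real.continuous_cosh.mul hf)).intervalIntegrable 0 x)
        ((show Continuous fun y => cG * Real.sinh (x - 1/2) * (Real.sinh y * f y) from continuous_const.mul (Real.continuous_sinh.mul hf)).intervalIntegrable 0 x),
      intervalIntegral.integral_const_mul, intervalIntegral.integral_const_mul]
    simp only [Acum, Bcum]; ring
  have i2 : (∫ y in x..(1:ℝ), Gper (x - y) * f y)
      = cG * (Real.cosh (x + 1/2) * (Acum f 1 - Acum f x)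
        - Real.sinh (x + 1/2) * (Bcum f 1 - Bcum f x)) := by
    rw [intervalIntegral.integral_congr e2]
    have e2' : Set.EqOn (fun y => (cG * Real.cosh (x - y + 1/2)) * f y)
        (fun y => (cG * Real.cosh (x + 1/2)) * (Real.cosh y * f y)
          - (cG * Real.sinh (x + 1/2)) * (Real.sinh y * f y)) (Set.uIcc x 1) := by
      intro y _
      beta_reduce
      rw [show x - y + 1/2 = (x + 1/2) - y from by ring, Real.cosh_sub]
      ring
    rw [intervalIntegral.integral_congr e2',
      intervalIntegral.integral_sub
        ((show Continuous fun y => cG * Real.cosh (x + 1/2) * (Real.cosh y * f y) from continuous_const.mul (Real.continuous_cosh.mul hf)).intervalIntegrable x 1)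
        ((show Continuous fun y => cG * Real.sinh (x + 1/2) * (Real.sinh y * f y) from continuous_const.mul (Real.continuous_sinh.mul hf)).intervalIntegrable x 1),
      intervalIntegral.integral_const_mul, intervalIntegral.integral_const_mul]
    have hA : (∫ y in x..(1:ℝ), Real.cosh y * f y) = Acum f 1 - Acum f x := by
      rw [Acum, Acum, ← intervalIntegral.integral_interval_sub_left
        ((show Continuous fun y => Real.cosh y * f y from Real.continuous_cosh.mul hf).intervalIntegrable 0 1)
        ((show Continuous fun y => Real.cosh y * f y from Real.continuous_cosh.mul hf).intervalIntegrable 0 x)]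
    have hB : (∫ y in x..(1:ℝ), Real.sinh y * f y) = Bcum f 1 - Bcum f x := by
      rw [Bcum, Bcum, ← intervalIntegral.integral_interval_sub_left
        ((show Continuous fun y => Real.sinh y * f y from Real.continuous_sinh.mul hf).intervalIntegrable 0 1)
        ((show Continuous fun y => Real.sinh y * f y from Real.continuous_sinh.mul hf).intervalIntegrable 0 x)]
    rw [hA, hB]; ring
  rw [split, i1, i2, Ffun]; ring

lemma deriv_convG_eq (f : ℝ → ℝ) (hf : Continuous f) {x : ℝ} (hx : x ∈ Set.Ioo (0:ℝ) 1) :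
    deriv (convG f) x = Dfun f x := by
  have heq : convG f =ᶠ[nhds x] Ffun f :=
    Filter.eventuallyEq_of_mem (Ioo_mem_nhds hx.1 hx.2) (fun y hy => convG_eq_s11 f hf hy)
  rw [Filter.EventuallyEq.deriv_eq heq, (hasDerivAt_Ffun f hf x).deriv]

/-- The cubic boundary terms vanish:
`∫₀¹ [-u uₓ(u-uₓₓ) - k uₓ(u-uₓₓ) - ∂ₓ(G*(u²+½uₓ²))(u-uₓₓ)] dx = 0`. -/
theorem stmt11 (k : ℝ) (u : ℝ → ℝ) (hu : ContDiff ℝ (⊤ : ℕ∞) u)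
    (h0 : u 0 = 0) (h1 : u 1 = 0) (h0' : deriv u 0 = 0) (h1' : deriv u 1 = 0) :
    (∫ x in (0:ℝ)..1,
      (-(u x * deriv u x * (u x - deriv (deriv u) x))
        - k * deriv u x * (u x - deriv (deriv u) x)
        - deriv (convG fun y => (u y)^2 + (1/2) * (deriv u y)^2) x
            * (u x - deriv (deriv u) x))) = 0 := by
  set f : ℝ → ℝ := fun y => (u y)^2 + (1/2) * (deriv u y)^2 with hfdef
  have huinf : ContDiff ℝ ((⊤:ℕ∞) : WithTop ℕ∞) u := hu.of_le (by simp)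
  have hdiffu : Differentiable ℝ u := (contDiff_infty_iff_deriv.mp huinf).1
  have hu' : ContDiff ℝ ((⊤:ℕ∞) : WithTop ℕ∞) (deriv u) := (contDiff_infty_iff_deriv.mp huinf).2
  have hdiffu' : Differentiable ℝ (deriv u) := (contDiff_infty_iff_deriv.mp hu').1
  have hu'' : ContDiff ℝ ((⊤:ℕ∞) : WithTop ℕ∞) (deriv (deriv u)) := (contDiff_infty_iff_deriv.mp hu').2
  have hf : Continuous f := ((hu.continuous.pow 2).add
    (continuous_const.mul (hu'.continuous.pow 2)))
  -- replace deriv (convG f) by Dfun f a.e.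
  have step1 : (∫ x in (0:ℝ)..1,
      (-(u x * deriv u x * (u x - deriv (deriv u) x))
        - k * deriv u x * (u x - deriv (deriv u) x)
        - deriv (convG f) x * (u x - deriv (deriv u) x)))
      = ∫ x in (0:ℝ)..1,
      (-(u x * deriv u x * (u x - deriv (deriv u) x))
        - k * deriv u x * (u x - deriv (deriv u) x)
        - Dfun f x * (u x - deriv (deriv u) x)) := by
    apply intervalIntegral.integral_congr_ae
    have hne : ∀ᵐ (x : ℝ), x ≠ 1 := by
      have h : (volume : Measure ℝ) {(1:ℝ)} = 0 := measure_singleton 1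
      filter_upwards [MeasureTheory.compl_mem_ae_iff.mpr h] with x hx
      simpa using hx
    filter_upwards [hne] with x hx1 hx
    rw [Set.uIoc_of_le (by norm_num : (0:ℝ) ≤ 1)] at hx
    have hxo : x ∈ Set.Ioo (0:ℝ) 1 := ⟨hx.1, lt_of_le_of_ne hx.2 hx1⟩
    rw [deriv_convG_eq f hf hxo]
  rw [step1]
  -- antiderivative
  have key : ∀ x ∈ Set.uIcc (0:ℝ) 1, HasDerivAt (fun x => u x * (deriv u x)^2/2
      - k*(u x)^2/2 + k*(deriv u x)^2/2 + Dfun f x * deriv u x - Ffun f x * u x)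
      (-(u x * deriv u x * (u x - deriv (deriv u) x))
        - k * deriv u x * (u x - deriv (deriv u) x)
        - Dfun f x * (u x - deriv (deriv u) x)) x := by
    intro x _
    have hdu : HasDerivAt u (deriv u x) x := (hdiffu x).hasDerivAt
    have hdu' : HasDerivAt (deriv u) (deriv (deriv u) x) x := (hdiffu' x).hasDerivAt
    have hD := hasDerivAt_Dfun f hf x
    have hF := hasDerivAt_Ffun f hf x
    have H := (((((hdu.mul (hdu'.pow 2)).div_const 2).sub
        (((hdu.pow 2).const_mul k).div_const 2)).add
        (((hdu'.pow 2).const_mul k).div_const 2)).add (hD.mul hdu')).sub (hF.mul hdu)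
    refine H.congr_deriv ?_
    simp only [hfdef, Pi.pow_apply]
    ring
  have hcont : Continuous fun x => (-(u x * deriv u x * (u x - deriv (deriv u) x))
        - k * deriv u x * (u x - deriv (deriv u) x)
        - Dfun f x * (u x - deriv (deriv u) x)) := by
    have hDc : Continuous (Dfun f) := by
      rw [continuous_iff_continuousAt]
      exact fun x => (hasDerivAt_Dfun f hf x).continuousAt
    have h1c := huinf.continuous
    have h2c := hu'.continuous
    have h3c := hu''.continuous
    exact (((h1c.mul h2c).mul (h1c.sub h3c)).neg.sub
      (((continuous_const.mul h2c)).mul (h1c.sub h3c))).sub (hDc.mul (h1c.sub h3c))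
  rw [intervalIntegral.integral_eq_sub_of_hasDerivAt key (hcont.intervalIntegrable 0 1)]
  simp [h0, h1, h0', h1']
end

section
/- Suppose u is a smooth solution of the generalized Camassa–Holm equation on [0,1]×[0,T) with conserved H^1 norm, and x_0 ∈ (0,1) is such that u_{xx}(x_0,t) = 0 for all t. Then h(t) = u_x(x_0,t) satisfies the differential inequality h'(t) ≤ -(1/2)h(t)^2 + ‖u_0‖_{H^1}^2. -/
open MeasureTheory

section Aux

lemma sinh_half_pos : 0 < Real.sinh (1/2) := Real.sinh_pos_iff.2 (by norm_num)

lemma Gper_lb (x : ℝ) : 1/(2*Real.sinh (1/2)) ≤ Gper x := by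
  have h := sinh_half_pos
  unfold Gper
  gcongr
  exact Real.one_le_cosh _

lemma Gper_ub (x : ℝ) : Gper x ≤ Real.cosh (1/2) / (2*Real.sinh (1/2)) := by
  have h := sinh_half_pos
  unfold Gper
  gcongr
  rw [Real.cosh_le_cosh]
  have h1 := Int.fract_nonneg x
  have h2 := Int.fract_lt_one x
  rw [abs_le]
  rw [abs_of_nonneg (by norm_num : (0:ℝ) ≤ 1/2)]
  constructor <;> linarith

lemma Gper_pos (x : ℝ) : 0 < Gper x :=
  lt_of_lt_of_le (by have := sinh_half_pos; positivity) (Gper_lb x)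

lemma Gper_meas : Measurable Gper :=
  (Real.continuous_cosh.measurable.comp ((measurable_fract).sub measurable_const)).div_const _

lemma key_arith : 2 * Real.sinh (1/2) - 1/(4 * Real.sinh (1/2)) ≤ 1 := by
  have hs := sinh_half_pos
  have hE : Real.sinh (1/2 : ℝ) = (Real.exp (1/2) - (Real.exp (1/2))⁻¹)/2 := by
    rw [Real.sinh_eq, Real.exp_neg]
  have hE2 : Real.exp (1/2) * Real.exp (1/2) = Real.exp 1 := by
    rw [← Real.exp_add]; norm_num
  have hEpos := Real.exp_pos (1/2 : ℝ)
  have he1 := Real.exp_one_lt_d9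
  have he2 := Real.exp_one_gt_d9
  have hElt : Real.exp (1/2) < 1.6488 := by nlinarith
  have hEgt : 1.6 < Real.exp (1/2) := by nlinarith
  have hinv : Real.exp (1/2) * (Real.exp (1/2))⁻¹ = 1 := mul_inv_cancel₀ hEpos.ne'
  have hIlt : (Real.exp (1/2))⁻¹ < 0.625 := by nlinarith
  have hIgt : 0.6065 < (Real.exp (1/2))⁻¹ := by nlinarith
  have hslt : Real.sinh (1/2 : ℝ) < 0.53 := by rw [hE]; nlinarith
  have h1 : (2 * Real.sinh (1/2) - 1) * (4 * Real.sinh (1/2)) ≤ 1 := by nlinarith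
  have h2 : 2 * Real.sinh (1/2) - 1 ≤ 1/(4*Real.sinh (1/2)) := by
    rw [le_div_iff₀ (by positivity)]; exact h1
  linarith

lemma convG_intble (F : ℝ → ℝ) (hF : Continuous F) (x0 : ℝ) :
    IntervalIntegrable (fun y => Gper (x0 - y) * F y) volume 0 1 := by
  rw [intervalIntegrable_iff_integrableOn_Ioc_of_le (by norm_num)]
  apply Integrable.bdd_mul (c := Real.cosh (1/2) / (2*Real.sinh (1/2))) (hF.integrableOn_Ioc)
  · exact ((Gper_meas.comp (measurable_const.sub measurable_id)).aestronglyMeasurable)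
  · refine Filter.Eventually.of_forall (fun y => ?_)
    rw [Real.norm_eq_abs, abs_of_pos (Gper_pos _)]
    exact Gper_ub _

lemma convG_ge (F : ℝ → ℝ) (hF : Continuous F) (hF0 : ∀ y, 0 ≤ F y) (x0 : ℝ) :
    (1/(2*Real.sinh (1/2))) * ∫ y in (0:ℝ)..1, F y ≤ convG F x0 := by
  rw [← intervalIntegral.integral_const_mul]
  exact intervalIntegral.integral_mono_on (by norm_num)
    ((hF.intervalIntegrable 0 1).const_mul _) (convG_intble F hF x0)
    (fun y _ => mul_le_mul_of_nonneg_right (Gper_lb _) (hF0 y))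

lemma sobolev (f : ℝ → ℝ) (hc : Continuous f) (hd' : ∀ x, HasDerivAt f (deriv f x) x)
    (hd : Continuous (deriv f)) {x0 a : ℝ} (hx0 : x0 ∈ Set.Icc (0:ℝ) 1) (ha : 0 < a) :
    (f x0)^2 ≤ (1+a) * (∫ x in (0:ℝ)..1, (f x)^2) + (1/a) * ∫ x in (0:ℝ)..1, (deriv f x)^2 := by
  obtain ⟨y, hy, hymin⟩ := isCompact_Icc.exists_isMinOn (Set.nonempty_Icc.2 (by norm_num))
    ((hc.pow 2).continuousOn : ContinuousOn (fun x => (f x)^2) (Set.Icc (0:ℝ) 1))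
  have h1 : (f y)^2 ≤ ∫ x in (0:ℝ)..1, (f x)^2 := by
    have : ∫ x in (0:ℝ)..1, (f y)^2 ≤ ∫ x in (0:ℝ)..1, (f x)^2 :=
      intervalIntegral.integral_mono_on (by norm_num) intervalIntegrable_const
        ((hc.pow 2).intervalIntegrable 0 1) (fun z hz => isMinOn_iff.mp hymin z hz)
    simpa using this
  have hg' : ∀ x, HasDerivAt (fun x => (f x)^2) (2 * f x * deriv f x) x := by
    intro x
    simpa [mul_comm] using (hd' x).fun_pow 2
  have hcont2 : Continuous (fun x => 2 * f x * deriv f x) :=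
    (continuous_const.mul hc).mul hd
  have hftc : ∫ x in y..x0, 2 * f x * deriv f x = (f x0)^2 - (f y)^2 :=
    intervalIntegral.integral_eq_sub_of_hasDerivAt (fun x _ => hg' x)
      (hcont2.intervalIntegrable _ _)
  have habs : |∫ x in y..x0, 2 * f x * deriv f x| ≤ ∫ x in (0:ℝ)..1, |2 * f x * deriv f x| := by
    have hm1 : (0:ℝ) ≤ min y x0 := le_min hy.1 hx0.1
    have hm2 : max y x0 ≤ (1:ℝ) := max_le hy.2 hx0.2
    have e1 : |∫ x in y..x0, 2 * f x * deriv f x|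
        = |∫ x in (min y x0)..(max y x0), 2 * f x * deriv f x| := by
      rcases le_total y x0 with h | h
      · rw [min_eq_left h, max_eq_right h]
      · rw [min_eq_right h, max_eq_left h, intervalIntegral.integral_symm, abs_neg]
    rw [e1]
    calc |∫ x in (min y x0)..(max y x0), 2 * f x * deriv f x|
        ≤ ∫ x in (min y x0)..(max y x0), |2 * f x * deriv f x| :=
          intervalIntegral.abs_integral_le_integral_abs (min_le_max)
      _ ≤ ∫ x in (0:ℝ)..1, |2 * f x * deriv f x| :=
          intervalIntegral.integral_mono_interval hm1 min_le_max hm2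
            (Filter.Eventually.of_forall fun x => abs_nonneg _)
            ((hcont2.abs).intervalIntegrable 0 1)
  have hpt : ∀ x, |2 * f x * deriv f x| ≤ a * (f x)^2 + (1/a) * (deriv f x)^2 := by
    intro x
    have hinv : a * (1/a) = 1 := mul_one_div_cancel ha.ne'
    rw [abs_le]
    constructor
    · nlinarith [sq_nonneg (a * f x + deriv f x), sq_nonneg (deriv f x), sq_nonneg (f x)]
    · nlinarith [sq_nonneg (a * f x - deriv f x), sq_nonneg (deriv f x), sq_nonneg (f x)]
  have h2 : ∫ x in (0:ℝ)..1, |2 * f x * deriv f x|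
      ≤ ∫ x in (0:ℝ)..1, (a * (f x)^2 + (1/a) * (deriv f x)^2) :=
    intervalIntegral.integral_mono_on (by norm_num) ((hcont2.abs).intervalIntegrable 0 1)
      (((continuous_const.mul (hc.pow 2)).add
        (continuous_const.mul (hd.pow 2))).intervalIntegrable 0 1)
      (fun z _ => hpt z)
  have h3 : ∫ x in (0:ℝ)..1, (a * (f x)^2 + (1/a) * (deriv f x)^2)
      = a * (∫ x in (0:ℝ)..1, (f x)^2) + (1/a) * ∫ x in (0:ℝ)..1, (deriv f x)^2 := by
    rw [intervalIntegral.integral_add (((hc.fun_pow 2).intervalIntegrable 0 1).const_mul _)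
      (((hd.fun_pow 2).intervalIntegrable 0 1).const_mul _),
      intervalIntegral.integral_const_mul, intervalIntegral.integral_const_mul]
  have := le_abs_self (∫ x in y..x0, 2 * f x * deriv f x)
  nlinarith [h1, habs, h2, h3, hftc]

end Aux

/-- If `uₓₓ(x₀,t)=0` for all `t` and the `H¹` norm is conserved, then
`h(t) = uₓ(x₀,t)` satisfies `h'(t) ≤ -(1/2)h(t)² + ‖u₀‖_{H¹}²`. -/
theorem stmt15 (k T : ℝ) (hT : 0 < T) (u : ℝ → ℝ → ℝ)
    (hsm : ContDiff ℝ (⊤ : ℕ∞) (fun p : ℝ × ℝ => u p.1 p.2))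
    (heq : ∀ x ∈ Set.Icc (0:ℝ) 1, ∀ t ∈ Set.Ico (0:ℝ) T,
      deriv (fun τ => deriv (fun s => u s τ) x) t
        = -(1/2) * (deriv (fun s => u s t) x)^2
          - (u x t + k) * deriv (deriv (fun s => u s t)) x
          + (u x t)^2
          - convG (fun y => (u y t)^2 + (1/2) * (deriv (fun r => u r t) y)^2) x)
    (hcons : ∀ t ∈ Set.Ico (0:ℝ) T,
      (∫ x in (0:ℝ)..1, ((u x t)^2 + (deriv (fun s => u s t) x)^2))
        = ∫ x in (0:ℝ)..1, ((u x 0)^2 + (deriv (fun s => u s 0) x)^2))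
    (x0 : ℝ) (hx0 : x0 ∈ Set.Ioo (0:ℝ) 1)
    (hxx : ∀ t ∈ Set.Ico (0:ℝ) T, deriv (deriv (fun s => u s t)) x0 = 0) :
    ∀ t ∈ Set.Ico (0:ℝ) T,
      deriv (fun τ => deriv (fun s => u s τ) x0) t
        ≤ -(1/2) * (deriv (fun s => u s t) x0)^2
          + ∫ x in (0:ℝ)..1, ((u x 0)^2 + (deriv (fun s => u s 0) x)^2) := by
  intro t ht
  set s := Real.sinh (1/2 : ℝ) with hs_def
  have hs : 0 < s := sinh_half_pos
  have hx0' : x0 ∈ Set.Icc (0:ℝ) 1 := Set.mem_Icc_of_Ioo hx0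
  -- smoothness of x ↦ u x t
  have hft : ContDiff ℝ (⊤ : ℕ∞) (fun x : ℝ => u x t) :=
    hsm.comp ((contDiff_id).prodMk contDiff_const)
  have hc : Continuous (fun x : ℝ => u x t) := hft.continuous
  have hdiff : Differentiable ℝ (fun x : ℝ => u x t) := hft.differentiable (by simp)
  have hd' : ∀ x, HasDerivAt (fun x : ℝ => u x t) (deriv (fun x : ℝ => u x t) x) x :=
    fun x => (hdiff x).hasDerivAt
  have hd : Continuous (deriv (fun x : ℝ => u x t)) := hft.continuous_deriv (by simp)
  set A := ∫ x in (0:ℝ)..1, (u x t)^2 with hA_def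
  set B := ∫ x in (0:ℝ)..1, (deriv (fun x : ℝ => u x t) x)^2 with hB_def
  have hA0 : 0 ≤ A := intervalIntegral.integral_nonneg (by norm_num) (fun x _ => sq_nonneg _)
  have hB0 : 0 ≤ B := intervalIntegral.integral_nonneg (by norm_num) (fun x _ => sq_nonneg _)
  -- conservation
  have hsplit : (∫ x in (0:ℝ)..1, ((u x t)^2 + (deriv (fun x : ℝ => u x t) x)^2)) = A + B :=
    intervalIntegral.integral_add ((hc.pow 2).intervalIntegrable 0 1)
      ((hd.pow 2).intervalIntegrable 0 1)
  have hI : (∫ x in (0:ℝ)..1, ((u x 0)^2 + (deriv (fun s => u s 0) x)^2)) = A + B := by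
    rw [← hcons t ht]; exact hsplit
  -- the convolution lower bound
  have hFc : Continuous (fun y => (u y t)^2 + (1/2) * (deriv (fun x : ℝ => u x t) y)^2) :=
    (hc.pow 2).add (continuous_const.mul (hd.pow 2))
  have hF0 : ∀ y, 0 ≤ (u y t)^2 + (1/2) * (deriv (fun x : ℝ => u x t) y)^2 :=
    fun y => by positivity
  have hFint : (∫ y in (0:ℝ)..1, ((u y t)^2 + (1/2) * (deriv (fun x : ℝ => u x t) y)^2))
      = A + (1/2) * B := by
    rw [intervalIntegral.integral_add ((hc.fun_pow 2).intervalIntegrable 0 1)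
      (((hd.fun_pow 2).intervalIntegrable 0 1).const_mul _),
      intervalIntegral.integral_const_mul]
  have hconv : (1/(2*s)) * (A + (1/2)*B)
      ≤ convG (fun y => (u y t)^2 + (1/2) * (deriv (fun x : ℝ => u x t) y)^2) x0 := by
    rw [← hFint]
    exact convG_ge _ hFc hF0 x0
  -- Sobolev
  have hm : 0 < 1/(2*s) := by positivity
  have hsob := sobolev (fun x : ℝ => u x t) hc hd' hd hx0' hm
  -- the equation at (x0, t)
  have heq0 := heq x0 hx0' t ht
  rw [hxx t ht, mul_zero, sub_zero] at heq0
  rw [heq0, hI]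
  have h1m : 1/(1/(2*s)) = 2*s := one_div_one_div _
  have h2m : (1/(2*s))/2 = 1/(4*s) := by rw [div_div]; ring_nf
  have hkey := key_arith
  -- (u x0 t)^2 - convG ... ≤ A + B
  have hfinal : (u x0 t)^2
      - convG (fun y => (u y t)^2 + (1/2) * (deriv (fun x : ℝ => u x t) y)^2) x0 ≤ A + B := by
    have hBle : (2*s - 1/(4*s)) * B ≤ B := by nlinarith
    have e : (1 + 1/(2*s)) * A + (1/(1/(2*s))) * B - (1/(2*s)) * (A + (1/2)*B)
        = A + (2*s - 1/(4*s)) * B := by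
      rw [h1m]
      field_simp
      ring
    nlinarith [hsob, hconv]
  linarith
end
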